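/- arXiv:1206.5704 — 4 statements merged into one kernel-verified Lean document; each statement's English description precedes it below -/
import Mathlib

section
/- Let λ ≥ 0 and Q₀ ≥ 0 be real constants, let F : ℝ → ℝ be Lipschitz continuous and bounded on ℝ, let g : ℝ → [0,∞) be a bounded Lipschitz continuous function, let Gᶜ : ℝ → ℝ be bounded and Lipschitz continuous, and let k : ℝ → [0,∞) be bounded and Lipschitz continuous. Then for every T > 0 there exists a unique continuous function X : [0,T] → ℝ satisfying, for all t ∈ [0,T], X_t = F(S(0,t)) + Q₀·Gᶜ(S(0,t)) + λ·∫₀ᵗ Gᶜ(S(s,t)) ds + ∫₀ᵗ (X_s − 1)⁺ · k(X_s) · g(S(s,t)) ds, where S(s,t) = ∫ₛᵗ k(X_u) du. -/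
/-
The nonlinearity `x ↦ (x - 1)⁺ k(x)` is only locally Lipschitz, so we first solve the equation
with `(x - 1)⁺` truncated at a level `R`. For Lipschitz data the right-hand side `Ψ` satisfies
the Volterra estimate `|Ψ X t - Ψ Y t| ≤ L ∫₀ᵗ |X - Y|`, hence the `n`-th Picard iterate is a
contraction of `C([0, T])` with constant `(L T)ⁿ / n!`, and the truncated equation has a unique
continuous solution. Both nonlinearities are bounded by `‖k‖∞ |x|`, so Grönwall's inequality
bounds every continuous solution of either equation by a constant that does not depend on `R`;
truncating above that constant, the two equations have the same continuous solutions.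
-/

open MeasureTheory Set

/-- The fluid-limit integral equation for the GI/G/n queue with state-dependent
service rate: `X_t = F(S(0,t)) + Q₀·Gᶜ(S(0,t)) + λ∫₀ᵗ Gᶜ(S(s,t)) ds
+ ∫₀ᵗ (X_s − 1)⁺ k(X_s) g(S(s,t)) ds`, where `S(s,t) = ∫ₛᵗ k(X_u) du`. -/
def FluidLimitEq (lam Q0 : ℝ) (F g Gc k : ℝ → ℝ) (T : ℝ) (X : ℝ → ℝ) : Prop :=
  ∀ t ∈ Set.Icc (0 : ℝ) T,
    X t = F (∫ u in (0 : ℝ)..t, k (X u))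
      + Q0 * Gc (∫ u in (0 : ℝ)..t, k (X u))
      + lam * ∫ s in (0 : ℝ)..t, Gc (∫ u in s..t, k (X u))
      + ∫ s in (0 : ℝ)..t, max (X s - 1) 0 * k (X s) * g (∫ u in s..t, k (X u))

open scoped NNReal Nat

namespace ContinuousMap

variable {E : Type*} [MetricSpace E] {T : ℝ} (hT : 0 ≤ T) {L : ℝ≥0}
  {Φ : C(Icc 0 T, E) → C(Icc 0 T, E)}

include hT in
theorem dist_iterate_apply_le_of_volterra
    (hΦ : ∀ f g (t : Icc 0 T),
      dist (Φ f t) (Φ g t)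
        ≤ L * ∫ s in 0..(t : ℝ), dist (Set.IccExtend hT f s) (Set.IccExtend hT g s))
    (n : ℕ) (f g : C(Icc 0 T, E)) (t : Icc 0 T) :
    dist (Φ^[n] f t) (Φ^[n] g t) ≤ (L * t) ^ n / n ! * dist f g := by
  induction n generalizing t with
  | zero => simpa using dist_apply_le_dist t
  | succ n ih =>
    rw [Function.iterate_succ_apply', Function.iterate_succ_apply']
    calc dist (Φ (Φ^[n] f) t) (Φ (Φ^[n] g) t)
        ≤ L * ∫ s in 0..(t : ℝ),
            dist (Set.IccExtend hT (Φ^[n] f) s) (Set.IccExtend hT (Φ^[n] g) s) :=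
          hΦ _ _ t
      _ ≤ L * ∫ s in 0..(t : ℝ), (L ^ n / n ! * dist f g) * s ^ n := by
          gcongr
          refine intervalIntegral.integral_mono_on t.2.1 ?_
            ((continuous_const.mul (continuous_pow n)).intervalIntegrable _ _) fun s hs => ?_
          · exact (Continuous.dist (by fun_prop) (by fun_prop)).intervalIntegrable _ _
          · have hsT : s ∈ Icc 0 T := ⟨hs.1, hs.2.trans t.2.2⟩
            convert ih ⟨s, hsT⟩ using 1
            · simp [IccExtend_of_mem hT _ hsT]
            · ring
      _ = (L * t) ^ (n + 1) / (n + 1) ! * dist f g := by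
          rw [intervalIntegral.integral_const_mul, integral_pow, Nat.factorial_succ]
          push_cast
          field_simp
          ring

include hT in
theorem existsUnique_fixedPoint_of_volterra [CompleteSpace E] [Nonempty E]
    (hΦ : ∀ f g (t : Icc 0 T),
      dist (Φ f t) (Φ g t)
        ≤ L * ∫ s in 0..(t : ℝ), dist (Set.IccExtend hT f s) (Set.IccExtend hT g s)) :
    ∃! f, Φ f = f := by
  obtain ⟨n, hn⟩ : ∃ n : ℕ, (L * T) ^ n / n ! < 1 :=
    ((FloorSemiring.tendsto_pow_div_factorial_atTop _).eventually_lt_const one_pos).exists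
  have hK : 0 ≤ (L * T) ^ n / n ! := by positivity
  have hcontr : ContractingWith ⟨_, hK⟩ Φ^[n] := by
    refine ⟨hn, LipschitzWith.of_dist_le_mul fun f g => ?_⟩
    refine (dist_le (by positivity)).2 fun t =>
      (dist_iterate_apply_le_of_volterra hT hΦ n f g t).trans ?_
    show _ ≤ (L * T) ^ n / n ! * dist f g
    gcongr
    exacts [mul_nonneg L.2 t.2.1, t.2.2]
  have : Nonempty C(Icc 0 T, E) := ⟨const _ (Classical.arbitrary E)⟩
  refine ⟨_, hcontr.isFixedPt_fixedPoint_iterate, fun f hf => hcontr.fixedPoint_unique ?_⟩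
  exact Function.IsFixedPt.iterate hf n

end ContinuousMap

theorem le_mul_exp_of_le_add_mul_integral {h : ℝ → ℝ} {T A K : ℝ} (hK : 0 ≤ K)
    (hc : Continuous h) (hle : ∀ t ∈ Icc 0 T, h t ≤ A + K * ∫ s in 0..t, h s) :
    ∀ t ∈ Icc 0 T, h t ≤ A * Real.exp (K * t) := by
  have hderiv (x : ℝ) : HasDerivAt (fun t => ∫ s in 0..t, h s) (h x) x :=
    intervalIntegral.integral_hasDerivAt_right (hc.intervalIntegrable _ _)
      (hc.stronglyMeasurableAtFilter _ _) hc.continuousAt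
  have hprim := le_gronwallBound_of_liminf_deriv_right_le (δ := 0) (K := K) (ε := A) (a := 0)
    (b := T)
    (fun x _ => (hderiv x).continuousAt.continuousWithinAt)
    (fun x _ _ hr => (hderiv x).hasDerivWithinAt.liminf_right_slope_le hr)
    (by simp) (fun x hx => (hle x (Ico_subset_Icc_self hx)).trans_eq (add_comm _ _))
  intro t ht
  calc h t ≤ A + K * ∫ s in 0..t, h s := hle t ht
    _ ≤ A + K * gronwallBound 0 K A t := by gcongr; simpa using hprim t ht
    _ = A * Real.exp (K * t) := by
      rcases eq_or_ne K 0 with rfl | hK0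
      · simp [gronwallBound_K0]
      · rw [gronwallBound_of_K_ne_0 hK0]
        field_simp
        ring

theorem abs_mul_sub_mul_le (a b c d : ℝ) : |a * b - c * d| ≤ |a - c| * |b| + |c| * |b - d| :=
  calc |a * b - c * d| = |(a - c) * b + c * (b - d)| := by ring_nf
    _ ≤ |a - c| * |b| + |c| * |b - d| := by
      rw [← abs_mul, ← abs_mul]; exact abs_add_le _ _

theorem abs_add_mul_add_mul_le (a b c d q l : ℝ) {t : ℝ} (ht : 0 ≤ t) :
    |a + q * b + l * (c + t * d)| ≤ |a| + |q| * |b| + |l| * (|c| + t * |d|) := by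
  have hcd : |c + t * d| ≤ |c| + t * |d| := by
    simpa only [abs_mul, abs_of_nonneg ht] using abs_add_le c (t * d)
  calc |a + q * b + l * (c + t * d)| ≤ |a| + |q * b| + |l * (c + t * d)| :=
        (abs_add_le _ _).trans (add_le_add_left (abs_add_le _ _) _)
    _ ≤ |a| + |q| * |b| + |l| * (|c| + t * |d|) := by
      rw [abs_mul, abs_mul]
      gcongr

theorem LipschitzWith.abs_sub_le_mul {f : ℝ → ℝ} {K : ℝ≥0} (hf : LipschitzWith K f)
    (x y : ℝ) :
    |f x - f y| ≤ K * |x - y| := by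
  simpa only [Real.dist_eq] using hf.dist_le_mul x y

theorem LipschitzWith.mul_of_abs_le {α : Type*} [PseudoMetricSpace α] {f h : α → ℝ}
    {Kf Kh Mf Mh : ℝ≥0} (hf : LipschitzWith Kf f) (hh : LipschitzWith Kh h)
    (hfM : ∀ x, |f x| ≤ Mf) (hhM : ∀ x, |h x| ≤ Mh) :
    LipschitzWith (Kf * Mh + Mf * Kh) fun x => f x * h x :=
  LipschitzWith.of_dist_le_mul fun x y =>
    calc |f x * h x - f y * h y| ≤ |f x - f y| * |h x| + |f y| * |h x - h y| :=
          abs_mul_sub_mul_le _ _ _ _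
      _ ≤ Kf * dist x y * Mh + Mf * (Kh * dist x y) := by
        gcongr
        · exact hf.dist_le_mul x y
        · exact hhM x
        · exact hfM y
        · exact hh.dist_le_mul x y
      _ = ↑(Kf * Mh + Mf * Kh) * dist x y := by push_cast; ring

theorem exists_nnreal_abs_le {α : Type*} {f : α → ℝ} (h : ∃ M : ℝ, ∀ x, |f x| ≤ M) :
    ∃ M : ℝ≥0, ∀ x, |f x| ≤ M :=
  let ⟨M, hM⟩ := h
  ⟨M.toNNReal, fun x => (hM x).trans M.le_coe_toNNReal⟩

noncomputable section FluidModel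

variable (lam Q0 : ℝ) (F g Gc k : ℝ → ℝ)

def serviceTime (X : ℝ → ℝ) (s t : ℝ) : ℝ := ∫ u in s..t, k (X u)

def fluidRHS (N X : ℝ → ℝ) (t : ℝ) : ℝ :=
  F (serviceTime k X 0 t) + Q0 * Gc (serviceTime k X 0 t)
    + lam * ∫ s in 0..t,
      (Gc (serviceTime k X s t) + ∫ r in 0..t, N (X r) * g (serviceTime k X r t))

def IsFluidSolution (N : ℝ → ℝ) (T : ℝ) (X : ℝ → ℝ) : Prop :=
  ∀ t ∈ Icc 0 T, X t = fluidRHS lam Q0 F g Gc k N X t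

def truncRate (R : ℝ≥0) (x : ℝ) : ℝ := min (max (x - 1) 0) R * k x

variable {lam Q0 F g Gc k} {N N' X Y : ℝ → ℝ} {T s t : ℝ}

theorem fluidLimitEq_iff :
    FluidLimitEq lam Q0 F g Gc k T X ↔
      IsFluidSolution lam Q0 F g Gc k (fun x => max (x - 1) 0 * k x) T X :=
  Iff.rfl

theorem serviceTime_congr (h : EqOn X Y (Icc 0 T)) (hs : s ∈ Icc 0 T) (ht : t ∈ Icc 0 T) :
    serviceTime k X s t = serviceTime k Y s t :=
  intervalIntegral.integral_congr fun _ hu => congrArg k (h (uIcc_subset_Icc hs ht hu))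

theorem continuous_serviceTime (hk : Continuous k) (hX : Continuous X) :
    Continuous fun p : ℝ × ℝ => serviceTime k X p.1 p.2 := by
  have hkX : Continuous fun u => k (X u) := hk.comp hX
  have hP := intervalIntegral.continuous_primitive (μ := volume)
    (fun a b => hkX.intervalIntegrable a b) 0
  have h (s t : ℝ) : serviceTime k X s t = (∫ u in 0..t, k (X u)) - ∫ u in 0..s, k (X u) :=
    (intervalIntegral.integral_interval_sub_left (hkX.intervalIntegrable _ _)
      (hkX.intervalIntegrable _ _)).symm
  simp only [h]
  exact (hP.comp continuous_snd).sub (hP.comp continuous_fst)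

theorem continuous_serviceTime_left (hk : Continuous k) (hX : Continuous X) (t : ℝ) :
    Continuous fun s => serviceTime k X s t :=
  (continuous_serviceTime hk hX).comp (continuous_id.prodMk continuous_const)

theorem abs_serviceTime_sub_le {Kk : ℝ≥0} (hk : LipschitzWith Kk k) (hX : Continuous X)
    (hY : Continuous Y) (hs : s ∈ Icc 0 t) :
    |serviceTime k X s t - serviceTime k Y s t| ≤ Kk * ∫ u in 0..t, |X u - Y u| := by
  have hXY : Continuous fun u => |X u - Y u| := (hX.sub hY).abs
  have hkX : Continuous fun u => k (X u) := hk.continuous.comp hX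
  have hkY : Continuous fun u => k (Y u) := hk.continuous.comp hY
  rw [serviceTime, serviceTime, ← intervalIntegral.integral_sub
    (hkX.intervalIntegrable _ _) (hkY.intervalIntegrable _ _)]
  calc |∫ u in s..t, (k (X u) - k (Y u))| ≤ ∫ u in s..t, Kk * |X u - Y u| :=
        intervalIntegral.norm_integral_le_of_norm_le (f := fun u => k (X u) - k (Y u)) hs.2
          (ae_of_all _ fun u _ => hk.abs_sub_le_mul (X u) (Y u))
          ((continuous_const.mul hXY).intervalIntegrable _ _)
    _ = Kk * ∫ u in s..t, |X u - Y u| := intervalIntegral.integral_const_mul _ _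
    _ ≤ Kk * ∫ u in 0..t, |X u - Y u| := by
        gcongr
        exact intervalIntegral.integral_mono_interval hs.1 hs.2 le_rfl
          (ae_of_all _ fun u => abs_nonneg _) (hXY.intervalIntegrable _ _)

theorem abs_integral_comp_serviceTime_sub_le {f : ℝ → ℝ} {Kf Kk : ℝ≥0}
    (hf : LipschitzWith Kf f) (hk : LipschitzWith Kk k) (hX : Continuous X) (hY : Continuous Y)
    (ht : 0 ≤ t) :
    |(∫ s in 0..t, f (serviceTime k X s t)) - ∫ s in 0..t, f (serviceTime k Y s t)|
      ≤ Kf * Kk * t * ∫ u in 0..t, |X u - Y u| := by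
  have hiX : IntervalIntegrable (fun s => f (serviceTime k X s t)) volume 0 t :=
    (hf.continuous.comp (continuous_serviceTime_left hk.continuous hX t)).intervalIntegrable _ _
  have hiY : IntervalIntegrable (fun s => f (serviceTime k Y s t)) volume 0 t :=
    (hf.continuous.comp (continuous_serviceTime_left hk.continuous hY t)).intervalIntegrable _ _
  rw [← intervalIntegral.integral_sub hiX hiY]
  calc _ ≤ Kf * (Kk * ∫ u in 0..t, |X u - Y u|) * |t - 0| :=
        intervalIntegral.norm_integral_le_of_norm_le_const
          (f := fun s => f (serviceTime k X s t) - f (serviceTime k Y s t)) fun s hs =>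
          (hf.abs_sub_le_mul _ _).trans <| by
            gcongr
            exact abs_serviceTime_sub_le hk hX hY (Ioc_subset_Icc_self (uIoc_of_le ht ▸ hs))
    _ = _ := by rw [sub_zero, abs_of_nonneg ht]; ring

theorem abs_integral_mul_comp_serviceTime_sub_le {h : ℝ → ℝ} {Kh Kk KN Mh MN : ℝ≥0}
    (hh : LipschitzWith Kh h) (hk : LipschitzWith Kk k) (hN : LipschitzWith KN N)
    (hhM : ∀ x, |h x| ≤ Mh) (hNM : ∀ x, |N x| ≤ MN) (hX : Continuous X) (hY : Continuous Y)
    (ht : 0 ≤ t) :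
    |(∫ r in 0..t, N (X r) * h (serviceTime k X r t))
        - ∫ r in 0..t, N (Y r) * h (serviceTime k Y r t)|
      ≤ (KN * Mh + MN * Kh * Kk * t) * ∫ u in 0..t, |X u - Y u| := by
  set D := ∫ u in 0..t, |X u - Y u|
  have hXY : Continuous fun r => |X r - Y r| := (hX.sub hY).abs
  have hiX : IntervalIntegrable (fun r => N (X r) * h (serviceTime k X r t)) volume 0 t :=
    ((hN.continuous.comp hX).mul (hh.continuous.comp
      (continuous_serviceTime_left hk.continuous hX t))).intervalIntegrable _ _
  have hiY : IntervalIntegrable (fun r => N (Y r) * h (serviceTime k Y r t)) volume 0 t :=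
    ((hN.continuous.comp hY).mul (hh.continuous.comp
      (continuous_serviceTime_left hk.continuous hY t))).intervalIntegrable _ _
  have hpt (r : ℝ) (hr : r ∈ Ioc 0 t) :
      |N (X r) * h (serviceTime k X r t) - N (Y r) * h (serviceTime k Y r t)|
        ≤ KN * Mh * |X r - Y r| + MN * (Kh * (Kk * D)) :=
    calc _ ≤ |N (X r) - N (Y r)| * |h (serviceTime k X r t)|
          + |N (Y r)| * |h (serviceTime k X r t) - h (serviceTime k Y r t)| :=
          abs_mul_sub_mul_le _ _ _ _
      _ ≤ KN * |X r - Y r| * Mh + MN * (Kh * (Kk * D)) := by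
        gcongr
        · exact hN.abs_sub_le_mul _ _
        · exact hhM _
        · exact hNM _
        · exact (hh.abs_sub_le_mul _ _).trans
            (by gcongr; exact abs_serviceTime_sub_le hk hX hY (Ioc_subset_Icc_self hr))
      _ = _ := by ring
  have hi : IntervalIntegrable (fun r => KN * Mh * |X r - Y r|) volume 0 t :=
    (continuous_const.mul hXY).intervalIntegrable _ _
  rw [← intervalIntegral.integral_sub hiX hiY]
  calc _ ≤ ∫ r in 0..t, (KN * Mh * |X r - Y r| + MN * (Kh * (Kk * D))) :=
        intervalIntegral.norm_integral_le_of_norm_le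
          (f := fun r => N (X r) * h (serviceTime k X r t) - N (Y r) * h (serviceTime k Y r t))
          ht (ae_of_all _ hpt) (hi.add intervalIntegrable_const)
    _ = _ := by
      rw [intervalIntegral.integral_add hi intervalIntegrable_const,
        intervalIntegral.integral_const_mul, intervalIntegral.integral_const, smul_eq_mul,
        sub_zero]
      ring

theorem fluidRHS_congr (hXY : EqOn X Y (Icc 0 T)) (hN : ∀ s ∈ Icc 0 T, N (X s) = N' (X s))
    (ht : t ∈ Icc 0 T) :
    fluidRHS lam Q0 F g Gc k N X t = fluidRHS lam Q0 F g Gc k N' Y t := by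
  have hsub : uIcc 0 t ⊆ Icc 0 T := uIcc_subset_Icc ⟨le_rfl, ht.1.trans ht.2⟩ ht
  have hS : ∀ s ∈ uIcc 0 t, serviceTime k X s t = serviceTime k Y s t :=
    fun s hs => serviceTime_congr hXY (hsub hs) ht
  have hA : ∫ r in 0..t, N (X r) * g (serviceTime k X r t)
      = ∫ r in 0..t, N' (Y r) * g (serviceTime k Y r t) :=
    intervalIntegral.integral_congr fun r hr => by
      rw [hN r (hsub hr), hXY (hsub hr), hS r hr]
  unfold fluidRHS
  rw [hS 0 left_mem_uIcc, hA]
  congr 2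
  exact intervalIntegral.integral_congr fun s hs => by simp only [hS s hs]

theorem fluidRHS_eq (hGc : Continuous Gc) (hk : Continuous k) (hX : Continuous X) (t : ℝ) :
    fluidRHS lam Q0 F g Gc k N X t
      = F (serviceTime k X 0 t) + Q0 * Gc (serviceTime k X 0 t)
        + lam * ((∫ s in 0..t, Gc (serviceTime k X s t))
          + t * ∫ r in 0..t, N (X r) * g (serviceTime k X r t)) := by
  have hGS : Continuous fun s => Gc (serviceTime k X s t) :=
    hGc.comp (continuous_serviceTime_left hk hX t)
  rw [fluidRHS, intervalIntegral.integral_add (hGS.intervalIntegrable _ _)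
    intervalIntegrable_const, intervalIntegral.integral_const, smul_eq_mul, sub_zero]

theorem continuous_fluidRHS (hF : Continuous F) (hg : Continuous g) (hGc : Continuous Gc)
    (hk : Continuous k) (hN : Continuous N) (hX : Continuous X) :
    Continuous (fluidRHS lam Q0 F g Gc k N X) := by
  have hS := continuous_serviceTime hk hX
  have hA : Continuous fun t => ∫ r in 0..t, N (X r) * g (serviceTime k X r t) :=
    intervalIntegral.continuous_parametric_intervalIntegral_of_continuous (μ := volume)
      (f := fun t r => N (X r) * g (serviceTime k X r t))
      ((hN.comp (hX.comp continuous_snd)).mul (hg.comp (hS.comp continuous_swap))) continuous_id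
  have hB := intervalIntegral.continuous_parametric_intervalIntegral_of_continuous (μ := volume)
      (f := fun t s => Gc (serviceTime k X s t) + ∫ r in 0..t, N (X r) * g (serviceTime k X r t))
      ((hGc.comp (hS.comp continuous_swap)).add (hA.comp continuous_fst)) continuous_id (a₀ := 0)
  have hS0 : Continuous fun t => serviceTime k X 0 t :=
    hS.comp (continuous_const.prodMk continuous_id)
  exact ((hF.comp hS0).add (continuous_const.mul (hGc.comp hS0))).add (continuous_const.mul hB)

theorem abs_fluidRHS_sub_le {KF Kg KG Kk KN Mg MN : ℝ≥0} (hF : LipschitzWith KF F)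
    (hg : LipschitzWith Kg g) (hGc : LipschitzWith KG Gc) (hk : LipschitzWith Kk k)
    (hN : LipschitzWith KN N) (hgM : ∀ x, |g x| ≤ Mg) (hNM : ∀ x, |N x| ≤ MN)
    (hX : Continuous X) (hY : Continuous Y) (ht : t ∈ Icc 0 T) :
    |fluidRHS lam Q0 F g Gc k N X t - fluidRHS lam Q0 F g Gc k N Y t|
      ≤ (KF * Kk + |Q0| * KG * Kk + |lam| * T * (KG * Kk + KN * Mg + MN * Kg * Kk * T))
        * ∫ s in 0..t, |X s - Y s| := by
  obtain ⟨ht0, htT⟩ := ht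
  have hT : 0 ≤ T := ht0.trans htT
  set D := ∫ s in 0..t, |X s - Y s|
  have hD : 0 ≤ D := intervalIntegral.integral_nonneg ht0 fun _ _ => abs_nonneg _
  have hS0 := abs_serviceTime_sub_le hk hX hY ⟨le_rfl, ht0⟩
  rw [fluidRHS_eq hGc.continuous hk.continuous hX, fluidRHS_eq hGc.continuous hk.continuous hY]
  calc _ = |(F (serviceTime k X 0 t) - F (serviceTime k Y 0 t))
          + Q0 * (Gc (serviceTime k X 0 t) - Gc (serviceTime k Y 0 t))
          + lam * (((∫ s in 0..t, Gc (serviceTime k X s t))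
              - ∫ s in 0..t, Gc (serviceTime k Y s t))
            + t * ((∫ r in 0..t, N (X r) * g (serviceTime k X r t))
              - ∫ r in 0..t, N (Y r) * g (serviceTime k Y r t)))| := by ring_nf
    _ ≤ KF * (Kk * D) + |Q0| * (KG * (Kk * D))
          + |lam| * (KG * Kk * T * D + T * ((KN * Mg + MN * Kg * Kk * T) * D)) := by
      refine (abs_add_mul_add_mul_le _ _ _ _ _ _ ht0).trans ?_
      gcongr
      · exact (hF.abs_sub_le_mul _ _).trans (by gcongr)
      · exact (hGc.abs_sub_le_mul _ _).trans (by gcongr)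
      · exact (abs_integral_comp_serviceTime_sub_le hGc hk hX hY ht0).trans (by gcongr)
      · exact (abs_integral_mul_comp_serviceTime_sub_le hg hk hN hgM hNM hX hY ht0).trans
          (by gcongr)
    _ = _ := by ring

theorem abs_fluidRHS_le {MF MG Mg MN : ℝ≥0} (hF : ∀ x, |F x| ≤ MF)
    (hGc : ∀ x, |Gc x| ≤ MG) (hg : ∀ x, |g x| ≤ Mg) (hN : ∀ x, |N x| ≤ MN * |x|) (hGcc : Continuous Gc)
    (hk : Continuous k) (hX : Continuous X) (ht : t ∈ Icc 0 T) :
    |fluidRHS lam Q0 F g Gc k N X t|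
      ≤ MF + |Q0| * MG + |lam| * T * MG + |lam| * T * Mg * MN * ∫ s in 0..t, |X s| := by
  obtain ⟨ht0, htT⟩ := ht
  have hc : |∫ s in 0..t, Gc (serviceTime k X s t)| ≤ MG * T :=
    calc _ ≤ MG * |t - 0| := intervalIntegral.norm_integral_le_of_norm_le_const
          (f := fun s => Gc (serviceTime k X s t)) fun s _ => hGc _
      _ ≤ MG * T := by rw [sub_zero, abs_of_nonneg ht0]; gcongr
  have hpt (r : ℝ) : |N (X r) * g (serviceTime k X r t)| ≤ Mg * MN * |X r| :=
    calc _ = |N (X r)| * |g (serviceTime k X r t)| := abs_mul _ _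
      _ ≤ MN * |X r| * Mg := by gcongr; exacts [hN _, hg _]
      _ = _ := by ring
  have hd : |∫ r in 0..t, N (X r) * g (serviceTime k X r t)| ≤ Mg * MN * ∫ s in 0..t, |X s| :=
    calc _ ≤ ∫ r in 0..t, Mg * MN * |X r| :=
          intervalIntegral.norm_integral_le_of_norm_le
            (f := fun r => N (X r) * g (serviceTime k X r t)) ht0
            (ae_of_all _ fun r _ => hpt r) ((continuous_const.mul hX.abs).intervalIntegrable _ _)
      _ = _ := intervalIntegral.integral_const_mul _ _
  rw [fluidRHS_eq hGcc hk hX]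
  refine (abs_add_mul_add_mul_le _ _ _ _ _ _ ht0).trans ?_
  calc _ ≤ MF + |Q0| * MG + |lam| * (MG * T + T * (Mg * MN * ∫ s in 0..t, |X s|)) := by
        gcongr
        exacts [hF _, hGc _, ht0.trans htT]
    _ = _ := by ring

theorem IsFluidSolution.abs_le {MF MG Mg MN : ℝ≥0} (hF : ∀ x, |F x| ≤ MF)
    (hGc : ∀ x, |Gc x| ≤ MG) (hg : ∀ x, |g x| ≤ Mg) (hN : ∀ x, |N x| ≤ MN * |x|)
    (hGcc : Continuous Gc) (hk : Continuous k) (hX : Continuous X)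
    (hsol : IsFluidSolution lam Q0 F g Gc k N T X) (ht : t ∈ Icc 0 T) :
    |X t| ≤ (MF + |Q0| * MG + |lam| * T * MG) * Real.exp (|lam| * T * Mg * MN * T) := by
  have hT : 0 ≤ T := ht.1.trans ht.2
  calc |X t| ≤ (MF + |Q0| * MG + |lam| * T * MG) * Real.exp (|lam| * T * Mg * MN * t) :=
        le_mul_exp_of_le_add_mul_integral (h := fun t => |X t|) (by positivity) hX.abs
          (fun s hs => (hsol s hs).symm ▸ abs_fluidRHS_le hF hGc hg hN hGcc hk hX hs) t ht
    _ ≤ _ := by gcongr; exact ht.2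

theorem exists_isFluidSolution_unique {KF Kg KG Kk KN Mg MN : ℝ≥0} (hT : 0 ≤ T)
    (hF : LipschitzWith KF F) (hg : LipschitzWith Kg g) (hGc : LipschitzWith KG Gc)
    (hk : LipschitzWith Kk k) (hN : LipschitzWith KN N) (hgM : ∀ x, |g x| ≤ Mg)
    (hNM : ∀ x, |N x| ≤ MN) :
    ∃ X, Continuous X ∧ IsFluidSolution lam Q0 F g Gc k N T X ∧
      ∀ Y, Continuous Y → IsFluidSolution lam Q0 F g Gc k N T Y → EqOn Y X (Icc 0 T) := by
  let Φ : C(Icc 0 T, ℝ) → C(Icc 0 T, ℝ) := fun f =>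
    ⟨fun t => fluidRHS lam Q0 F g Gc k N (IccExtend hT f) t,
      (continuous_fluidRHS hF.continuous hg.continuous hGc.continuous hk.continuous
        hN.continuous f.continuous.Icc_extend').comp continuous_subtype_val⟩
  let L : ℝ≥0 :=
    ⟨KF * Kk + |Q0| * KG * Kk + |lam| * T * (KG * Kk + KN * Mg + MN * Kg * Kk * T), by positivity⟩
  obtain ⟨f, hf, huniq⟩ := ContinuousMap.existsUnique_fixedPoint_of_volterra hT (L := L)
    (Φ := Φ) fun f f' t => by
      simp only [Real.dist_eq]
      exact abs_fluidRHS_sub_le hF hg hGc hk hN hgM hNM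
        f.continuous.Icc_extend' f'.continuous.Icc_extend' t.2
  refine ⟨IccExtend hT f, f.continuous.Icc_extend', fun t ht => ?_, fun Y hY hYsol => ?_⟩
  · rw [IccExtend_of_mem hT f ht]
    conv_lhs => rw [← hf]
    rfl
  · let fY : C(Icc 0 T, ℝ) := ⟨fun t => Y t, hY.comp continuous_subtype_val⟩
    have hYf : EqOn (IccExtend hT fY) Y (Icc 0 T) := fun t ht => IccExtend_of_mem hT fY ht
    have hfY : fY = f := huniq fY <| ContinuousMap.ext fun t =>
      (fluidRHS_congr hYf (fun _ _ => rfl) t.2).trans (hYsol t t.2).symm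
    intro t ht
    rw [← hYf ht, hfY]

theorem abs_max_sub_one_le_abs (x : ℝ) : |max (x - 1) 0| ≤ |x| := by
  rw [abs_of_nonneg (le_max_right _ _)]
  exact max_le (by linarith [le_abs_self x]) (abs_nonneg x)

theorem lipschitzWith_truncRate {R Kk Mk : ℝ≥0} (hk : LipschitzWith Kk k)
    (hkM : ∀ x, |k x| ≤ Mk) : LipschitzWith (1 * Mk + R * Kk) (truncRate k R) := by
  have hm : LipschitzWith 1 fun x : ℝ => min (max (x - 1) 0) (R : ℝ) :=
    (((IsometryEquiv.subRight (1 : ℝ)).isometry.lipschitz).max_const 0).min_const R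
  refine hm.mul_of_abs_le hk (fun x => ?_) hkM
  rw [abs_of_nonneg (le_min (le_max_right _ _) R.coe_nonneg)]
  exact min_le_right _ _

theorem abs_truncRate_le {R Mk : ℝ≥0} (hkM : ∀ x, |k x| ≤ Mk) (x : ℝ) :
    |truncRate k R x| ≤ (R * Mk : ℝ≥0) := by
  rw [NNReal.coe_mul, truncRate, abs_mul, abs_of_nonneg (le_min (le_max_right _ _) R.coe_nonneg)]
  exact mul_le_mul (min_le_right _ _) (hkM x) (abs_nonneg _) R.coe_nonneg

theorem abs_truncRate_le_mul_abs {R Mk : ℝ≥0} (hkM : ∀ x, |k x| ≤ Mk) (x : ℝ) :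
    |truncRate k R x| ≤ Mk * |x| := by
  rw [truncRate, abs_mul, abs_of_nonneg (le_min (le_max_right _ _) R.coe_nonneg), mul_comm]
  exact mul_le_mul (hkM x) ((min_le_left _ _).trans ((le_abs_self _).trans
    (abs_max_sub_one_le_abs x))) (le_min (le_max_right _ _) R.coe_nonneg) Mk.coe_nonneg

theorem truncRate_of_le {R : ℝ≥0} {x : ℝ} (h : x ≤ R) :
    truncRate k R x = max (x - 1) 0 * k x := by
  rw [truncRate, min_eq_left (max_le (by linarith) R.coe_nonneg)]

theorem IsFluidSolution.exists_continuous (hT : 0 ≤ T) (hX : ContinuousOn X (Icc 0 T))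
    (hsol : IsFluidSolution lam Q0 F g Gc k N T X) :
    ∃ X', Continuous X' ∧ EqOn X' X (Icc 0 T) ∧ IsFluidSolution lam Q0 F g Gc k N T X' := by
  have hXX' : EqOn (IccExtend hT ((Icc 0 T).domRestrict X)) X (Icc 0 T) :=
    fun t ht => IccExtend_of_mem hT _ ht
  refine ⟨_, (continuousOn_iff_continuous_domRestrict.1 hX).Icc_extend', hXX', fun t ht => ?_⟩
  rw [hXX' ht, hsol t ht]
  exact fluidRHS_congr hXX'.symm (fun _ _ => rfl) ht

theorem fluidLimitEq_iff_isFluidSolution_truncRate {MF MG Mg Mk R : ℝ≥0}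
    (hF : ∀ x, |F x| ≤ MF) (hGc : ∀ x, |Gc x| ≤ MG) (hg : ∀ x, |g x| ≤ Mg)
    (hkM : ∀ x, |k x| ≤ Mk) (hGcc : Continuous Gc) (hk : Continuous k)
    (hR : (MF + |Q0| * MG + |lam| * T * MG) * Real.exp (|lam| * T * Mg * Mk * T) ≤ R)
    (hX : Continuous X) :
    FluidLimitEq lam Q0 F g Gc k T X ↔ IsFluidSolution lam Q0 F g Gc k (truncRate k R) T X := by
  have htrunc (N : ℝ → ℝ) (hN : ∀ x, |N x| ≤ Mk * |x|)
      (hsol : IsFluidSolution lam Q0 F g Gc k N T X) (s : ℝ) (hs : s ∈ Icc 0 T) :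
      truncRate k R (X s) = max (X s - 1) 0 * k (X s) :=
    truncRate_of_le ((le_abs_self _).trans ((hsol.abs_le hF hGc hg hN hGcc hk hX hs).trans hR))
  have hrate (x : ℝ) : |max (x - 1) 0 * k x| ≤ Mk * |x| := by
    rw [abs_mul, mul_comm]
    exact mul_le_mul (hkM x) (abs_max_sub_one_le_abs x) (abs_nonneg _) Mk.coe_nonneg
  rw [fluidLimitEq_iff]
  refine ⟨fun hsol t ht => ?_, fun hsol t ht => ?_⟩
  · exact (hsol t ht).trans
      (fluidRHS_congr (eqOn_refl _ _) (fun s hs => (htrunc _ hrate hsol s hs).symm) ht)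
  · exact (hsol t ht).trans
      (fluidRHS_congr (eqOn_refl _ _) (htrunc _ (abs_truncRate_le_mul_abs hkM) hsol) ht)

end FluidModel

theorem stmt0_general (lam Q0 : ℝ)
    (F g Gc k : ℝ → ℝ)
    (hF_lip : ∃ K : NNReal, LipschitzWith K F) (hF_bdd : ∃ M : ℝ, ∀ x, |F x| ≤ M)
    (hg_lip : ∃ K : NNReal, LipschitzWith K g) (hg_bdd : ∃ M : ℝ, ∀ x, |g x| ≤ M)
    (hGc_lip : ∃ K : NNReal, LipschitzWith K Gc) (hGc_bdd : ∃ M : ℝ, ∀ x, |Gc x| ≤ M)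
    (hk_lip : ∃ K : NNReal, LipschitzWith K k) (hk_bdd : ∃ M : ℝ, ∀ x, |k x| ≤ M)
    (T : ℝ) (hT : 0 < T) :
    (∃ X : ℝ → ℝ, ContinuousOn X (Set.Icc 0 T) ∧ FluidLimitEq lam Q0 F g Gc k T X) ∧
    (∀ X Y : ℝ → ℝ, ContinuousOn X (Set.Icc 0 T) → FluidLimitEq lam Q0 F g Gc k T X →
      ContinuousOn Y (Set.Icc 0 T) → FluidLimitEq lam Q0 F g Gc k T Y →
      Set.EqOn X Y (Set.Icc 0 T)) := by
  obtain ⟨KF, hF⟩ := hF_lip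
  obtain ⟨Kg, hg⟩ := hg_lip
  obtain ⟨KG, hGc⟩ := hGc_lip
  obtain ⟨Kk, hk⟩ := hk_lip
  obtain ⟨MF, hMF⟩ := exists_nnreal_abs_le hF_bdd
  obtain ⟨Mg, hMg⟩ := exists_nnreal_abs_le hg_bdd
  obtain ⟨MG, hMG⟩ := exists_nnreal_abs_le hGc_bdd
  obtain ⟨Mk, hMk⟩ := exists_nnreal_abs_le hk_bdd
  let R : ℝ≥0 := ⟨(MF + |Q0| * MG + |lam| * T * MG) * Real.exp (|lam| * T * Mg * Mk * T),
    by positivity⟩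
  have hiff (X : ℝ → ℝ) (hX : Continuous X) :=
    fluidLimitEq_iff_isFluidSolution_truncRate (R := R) hMF hMG hMg hMk hGc.continuous
      hk.continuous le_rfl hX
  obtain ⟨X, hX, hXsol, huniq⟩ := exists_isFluidSolution_unique hT.le hF hg hGc hk
    (lipschitzWith_truncRate hk hMk) hMg (abs_truncRate_le hMk)
  refine ⟨⟨X, hX.continuousOn, (hiff X hX).2 hXsol⟩, fun Y Z hY hYsol hZ hZsol => ?_⟩
  obtain ⟨Y', hY', hYY', hY'sol⟩ :=
    IsFluidSolution.exists_continuous hT.le hY (fluidLimitEq_iff.1 hYsol)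
  obtain ⟨Z', hZ', hZZ', hZ'sol⟩ :=
    IsFluidSolution.exists_continuous hT.le hZ (fluidLimitEq_iff.1 hZsol)
  have hY'X := huniq Y' hY' ((hiff Y' hY').1 (fluidLimitEq_iff.2 hY'sol))
  have hZ'X := huniq Z' hZ' ((hiff Z' hZ').1 (fluidLimitEq_iff.2 hZ'sol))
  exact hYY'.symm.trans (hY'X.trans (hZ'X.symm.trans hZZ'))

theorem stmt0 (lam Q0 : ℝ) (hlam : 0 ≤ lam) (hQ0 : 0 ≤ Q0)
    (F g Gc k : ℝ → ℝ)
    (hF_lip : ∃ K : NNReal, LipschitzWith K F) (hF_bdd : ∃ M : ℝ, ∀ x, |F x| ≤ M)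
    (hg_lip : ∃ K : NNReal, LipschitzWith K g) (hg_bdd : ∃ M : ℝ, ∀ x, |g x| ≤ M)
    (hg_nonneg : ∀ x, 0 ≤ g x)
    (hGc_lip : ∃ K : NNReal, LipschitzWith K Gc) (hGc_bdd : ∃ M : ℝ, ∀ x, |Gc x| ≤ M)
    (hk_lip : ∃ K : NNReal, LipschitzWith K k) (hk_bdd : ∃ M : ℝ, ∀ x, |k x| ≤ M)
    (hk_nonneg : ∀ x, 0 ≤ k x)
    (T : ℝ) (hT : 0 < T) :
    (∃ X : ℝ → ℝ, ContinuousOn X (Set.Icc 0 T) ∧ FluidLimitEq lam Q0 F g Gc k T X) ∧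
    (∀ X Y : ℝ → ℝ, ContinuousOn X (Set.Icc 0 T) → FluidLimitEq lam Q0 F g Gc k T X →
      ContinuousOn Y (Set.Icc 0 T) → FluidLimitEq lam Q0 F g Gc k T Y →
      Set.EqOn X Y (Set.Icc 0 T)) :=
  stmt0_general lam Q0 F g Gc k hF_lip hF_bdd hg_lip hg_bdd hGc_lip hGc_bdd hk_lip hk_bdd T hT
end

section
/- Fix T > 0. Let k, H₁, H₂, H₃, H₄ : ℝ → ℝ be bounded, Lipschitz continuous functions. Then the integral equation x_t = H₁(∫₀ᵗ k(x_s) ds) + ∫₀ᵗ H₂(∫ₛᵗ k(x_u) du) ds + ∫₀ᵗ H₃(x_s)·H₄(∫ₛᵗ k(x_u) du) ds, for t ∈ [0,T] (so that in particular x₀ = H₁(0)), has a unique solution in the space C([0,T], ℝ) of continuous real-valued functions on [0,T]. -/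
/-!
Write the equation as `x = R x`. Since `k, H₁, …, H₄` are Lipschitz and `H₃, H₄` are bounded,
`R x t` depends on `x` only through `[0, t]` and satisfies the Volterra-type estimate
`|R x t - R y t| ≤ A ∫₀ᵗ |x - y|` for continuous `x, y`. Iterating it gives
`|Rⁿ x t - Rⁿ y t| ≤ (A t)ⁿ / n! · ‖x - y‖`, so some iterate of `R` is a contraction of
`C([0, T], ℝ)`, and Banach's fixed point theorem yields exactly one solution.
-/

open MeasureTheory Set

/-- The integral equation
`x_t = H₁(∫₀ᵗ k(x_s) ds) + ∫₀ᵗ H₂(∫ₛᵗ k(x_u) du) ds + ∫₀ᵗ H₃(x_s)·H₄(∫ₛᵗ k(x_u) du) ds`. -/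
def IntegralEq1 (k H1 H2 H3 H4 : ℝ → ℝ) (T : ℝ) (x : ℝ → ℝ) : Prop :=
  ∀ t ∈ Set.Icc (0 : ℝ) T,
    x t = H1 (∫ u in (0 : ℝ)..t, k (x u))
      + ∫ s in (0 : ℝ)..t, H2 (∫ u in s..t, k (x u))
      + ∫ s in (0 : ℝ)..t, H3 (x s) * H4 (∫ u in s..t, k (x u))

open scoped Nat

section Volterra

variable {T A : ℝ}

theorem abs_iterate_sub_le_of_volterra_bound (hT : 0 ≤ T) (hA : 0 ≤ A)
    {Φ : C(Icc 0 T, ℝ) → C(Icc 0 T, ℝ)}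
    (hΦ : ∀ x y (t : Icc 0 T),
      |Φ x t - Φ y t| ≤ A * ∫ u in 0..(t : ℝ), |IccExtend hT x u - IccExtend hT y u|)
    (n : ℕ) (x y : C(Icc 0 T, ℝ)) (t : Icc 0 T) :
    |Φ^[n] x t - Φ^[n] y t| ≤ (A * t) ^ n / n ! * dist x y := by
  induction n generalizing t with
  | zero => simpa [Real.dist_eq] using ContinuousMap.dist_apply_le_dist (f := x) (g := y) t
  | succ n ih =>
    have ht : 0 ≤ (t : ℝ) := t.2.1
    have ih_extend : ∀ u ∈ Icc 0 (t : ℝ), |IccExtend hT (Φ^[n] x) u - IccExtend hT (Φ^[n] y) u|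
        ≤ (A * u) ^ n / n ! * dist x y := fun u hu => by
      have hu' : u ∈ Icc 0 T := ⟨hu.1, hu.2.trans t.2.2⟩
      simpa only [IccExtend_of_mem hT _ hu'] using ih ⟨u, hu'⟩
    rw [Function.iterate_succ_apply', Function.iterate_succ_apply']
    calc |Φ (Φ^[n] x) t - Φ (Φ^[n] y) t|
        ≤ A * ∫ u in 0..(t : ℝ), |IccExtend hT (Φ^[n] x) u - IccExtend hT (Φ^[n] y) u| :=
          hΦ _ _ t
      _ ≤ A * ∫ u in 0..(t : ℝ), (A * u) ^ n / n ! * dist x y := by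
          gcongr
          refine intervalIntegral.integral_mono_on ht ?_ ?_ ih_extend
          · exact (((Φ^[n] x).continuous.Icc_extend').sub
              (Φ^[n] y).continuous.Icc_extend').abs.intervalIntegrable _ _
          · exact Continuous.intervalIntegrable (by fun_prop) _ _
      _ = (A * t) ^ (n + 1) / (n + 1)! * dist x y := by
          simp_rw [mul_pow, mul_div_right_comm _ (_ ^ n), mul_right_comm _ (_ ^ n)]
          rw [intervalIntegral.integral_const_mul, integral_pow, Nat.factorial_succ]
          push_cast
          field_simp
          ring

theorem existsUnique_isFixedPt_of_volterra_bound (hT : 0 ≤ T) (hA : 0 ≤ A)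
    {Φ : C(Icc 0 T, ℝ) → C(Icc 0 T, ℝ)}
    (hΦ : ∀ x y (t : Icc 0 T),
      |Φ x t - Φ y t| ≤ A * ∫ u in 0..(t : ℝ), |IccExtend hT x u - IccExtend hT y u|) :
    ∃! x, Function.IsFixedPt Φ x := by
  obtain ⟨n, hn⟩ : ∃ n : ℕ, (A * T) ^ n / n ! < 1 :=
    ((FloorSemiring.tendsto_pow_div_factorial_atTop (A * T)).eventually
      (gt_mem_nhds one_pos)).exists
  set K : NNReal := ⟨(A * T) ^ n / n !, by positivity⟩
  have hK : ContractingWith K Φ^[n] := by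
    refine ⟨hn, LipschitzWith.of_dist_le_mul fun x y => ?_⟩
    refine (ContinuousMap.dist_le (by positivity)).2 fun t => ?_
    rw [Real.dist_eq]
    refine (abs_iterate_sub_le_of_volterra_bound hT hA hΦ n x y t).trans ?_
    show _ ≤ (A * T) ^ n / n ! * dist x y
    have := mul_nonneg hA t.2.1
    gcongr
    exact t.2.2
  exact ⟨_, hK.isFixedPt_fixedPoint_iterate,
    fun y hy => hK.fixedPoint_unique' (hy.iterate n) (hK.isFixedPt_fixedPoint_iterate.iterate n)⟩

theorem exists_and_unique_solution_of_volterra_bound (hT : 0 ≤ T) (hA : 0 ≤ A)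
    {R : (ℝ → ℝ) → ℝ → ℝ}
    (hcont : ∀ x, Continuous x → Continuous (R x))
    (hcongr : ∀ x y, EqOn x y (Icc 0 T) → EqOn (R x) (R y) (Icc 0 T))
    (hR : ∀ x y, Continuous x → Continuous y → ∀ t ∈ Icc 0 T,
      |R x t - R y t| ≤ A * ∫ u in 0..t, |x u - y u|) :
    (∃ x, ContinuousOn x (Icc 0 T) ∧ ∀ t ∈ Icc 0 T, x t = R x t) ∧
    ∀ x y, ContinuousOn x (Icc 0 T) → (∀ t ∈ Icc 0 T, x t = R x t) →
      ContinuousOn y (Icc 0 T) → (∀ t ∈ Icc 0 T, y t = R y t) → EqOn x y (Icc 0 T) := by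
  let Φ (x : C(Icc 0 T, ℝ)) : C(Icc 0 T, ℝ) :=
    ⟨fun t => R (IccExtend hT x) t,
      (hcont _ x.continuous.Icc_extend').comp continuous_subtype_val⟩
  obtain ⟨z, hz, hz_unique⟩ := existsUnique_isFixedPt_of_volterra_bound hT hA (Φ := Φ)
    fun x y t => hR _ _ x.continuous.Icc_extend' y.continuous.Icc_extend' t t.2
  have isFixedPt_of_solution : ∀ x, ContinuousOn x (Icc 0 T) →
      (∀ t ∈ Icc 0 T, x t = R x t) →
      ∃ x' : C(Icc 0 T, ℝ), Function.IsFixedPt Φ x' ∧ ∀ t, x' t = x t := by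
    intro x hx hxR
    refine ⟨⟨_, hx.domRestrict⟩, ContinuousMap.ext fun t => ?_, fun t => rfl⟩
    have hext : EqOn (IccExtend hT ((Icc 0 T).domRestrict x)) x (Icc 0 T) :=
      fun u hu => IccExtend_of_mem hT _ hu
    exact (hcongr _ _ hext t.2).trans (hxR t t.2).symm
  refine ⟨⟨IccExtend hT z, z.continuous.Icc_extend'.continuousOn, fun t ht => ?_⟩, ?_⟩
  · rw [IccExtend_of_mem hT z ht]
    exact (congrFun (congrArg DFunLike.coe hz) ⟨t, ht⟩).symm
  · intro x y hx hxR hy hyR t ht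
    obtain ⟨x', hx', hxx'⟩ := isFixedPt_of_solution x hx hxR
    obtain ⟨y', hy', hyy'⟩ := isFixedPt_of_solution y hy hyR
    rw [← hxx' ⟨t, ht⟩, ← hyy' ⟨t, ht⟩, hz_unique x' hx', hz_unique y' hy']

end Volterra

@[fun_prop]
theorem continuous_intervalIntegral_of_continuous {X E : Type*} [TopologicalSpace X]
    [NormedAddCommGroup E] [NormedSpace ℝ E] {g : ℝ → E} (hg : Continuous g)
    {a b : X → ℝ} (ha : Continuous a) (hb : Continuous b) :
    Continuous fun p => ∫ u in a p..b p, g u := by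
  have hG := intervalIntegral.continuous_primitive (μ := volume) (hg.intervalIntegrable ·) 0
  refine ((hG.comp hb).sub (hG.comp ha)).congr fun p => ?_
  exact intervalIntegral.integral_interval_sub_left (hg.intervalIntegrable _ _)
    (hg.intervalIntegrable _ _)

theorem abs_intervalIntegral_sub_le_of_forall {f g h : ℝ → ℝ} {a b : ℝ} (hab : a ≤ b)
    (hf : IntervalIntegrable f volume a b) (hg : IntervalIntegrable g volume a b)
    (hh : IntervalIntegrable h volume a b) (hfg : ∀ s ∈ Icc a b, |f s - g s| ≤ h s) :
    |(∫ s in a..b, f s) - ∫ s in a..b, g s| ≤ ∫ s in a..b, h s := by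
  rw [← intervalIntegral.integral_sub hf hg]
  exact (intervalIntegral.abs_integral_le_integral_abs hab).trans
    (intervalIntegral.integral_mono_on hab (hf.sub hg).abs hh hfg)

theorem LipschitzWith.abs_sub_le {K : NNReal} {f : ℝ → ℝ} (hf : LipschitzWith K f) (a b : ℝ) :
    |f a - f b| ≤ K * |a - b| := by
  simpa only [Real.dist_eq] using hf.dist_le_mul a b

theorem abs_intervalIntegral_comp_sub_le {K : NNReal} {k x y : ℝ → ℝ} (hk : LipschitzWith K k)
    (hx : Continuous x) (hy : Continuous y) {a b : ℝ} (hab : a ≤ b) :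
    |(∫ u in a..b, k (x u)) - ∫ u in a..b, k (y u)| ≤ K * ∫ u in a..b, |x u - y u| := by
  have := hk.continuous
  rw [← intervalIntegral.integral_const_mul]
  refine abs_intervalIntegral_sub_le_of_forall hab
    (Continuous.intervalIntegrable (by fun_prop) _ _)
    (Continuous.intervalIntegrable (by fun_prop) _ _)
    (Continuous.intervalIntegrable (by fun_prop) _ _) fun u _ => hk.abs_sub_le _ _

theorem abs_mul_sub_mul_le_s1 {f g : ℝ → ℝ} {Kf Kg : NNReal} {Mf Mg : ℝ}
    (hf : LipschitzWith Kf f) (hg : LipschitzWith Kg g)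
    (hfM : ∀ y, |f y| ≤ Mf) (hgM : ∀ y, |g y| ≤ Mg) (a a' b b' : ℝ) :
    |f a * g b - f a' * g b'| ≤ Mf * Kg * |b - b'| + Mg * Kf * |a - a'| := by
  have hMf : 0 ≤ Mf := (abs_nonneg _).trans (hfM 0)
  calc |f a * g b - f a' * g b'| = |f a * (g b - g b') + (f a - f a') * g b'| := by ring_nf
    _ ≤ |f a| * |g b - g b'| + |f a - f a'| * |g b'| := by
        rw [← abs_mul, ← abs_mul]; exact abs_add_le _ _
    _ ≤ Mf * (Kg * |b - b'|) + Kf * |a - a'| * Mg := by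
        gcongr
        exacts [hfM a, hg.abs_sub_le b b', hf.abs_sub_le a a', hgM b']
    _ = Mf * Kg * |b - b'| + Mg * Kf * |a - a'| := by ring

namespace IntegralEq1

variable {k H1 H2 H3 H4 : ℝ → ℝ}

variable (k H1 H2 H3 H4) in
noncomputable def rhs (x : ℝ → ℝ) (t : ℝ) : ℝ :=
  H1 (∫ u in (0 : ℝ)..t, k (x u))
    + ∫ s in (0 : ℝ)..t, H2 (∫ u in s..t, k (x u))
    + ∫ s in (0 : ℝ)..t, H3 (x s) * H4 (∫ u in s..t, k (x u))

theorem rhs_congr {T : ℝ} {x y : ℝ → ℝ} (hxy : EqOn x y (Icc 0 T)) :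
    EqOn (rhs k H1 H2 H3 H4 x) (rhs k H1 H2 H3 H4 y) (Icc 0 T) := by
  intro t ht
  have inner : ∀ s ∈ uIcc 0 t, ∫ u in s..t, k (x u) = ∫ u in s..t, k (y u) := fun s hs =>
    intervalIntegral.integral_congr fun u hu => by
      rw [hxy ((uIcc_subset_uIcc hs right_mem_uIcc).trans
        ((uIcc_of_le ht.1).trans_subset (Icc_subset_Icc_right ht.2)) hu)]
  have hxy_t : ∀ s ∈ uIcc 0 t, x s = y s := fun s hs =>
    hxy ((uIcc_of_le ht.1).trans_subset (Icc_subset_Icc_right ht.2) hs)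
  have third_integral : ∫ s in (0 : ℝ)..t, H3 (x s) * H4 (∫ u in s..t, k (x u))
      = ∫ s in (0 : ℝ)..t, H3 (y s) * H4 (∫ u in s..t, k (y u)) :=
    intervalIntegral.integral_congr fun s hs => by simp only [hxy_t s hs, inner s hs]
  unfold rhs
  rw [inner 0 left_mem_uIcc, third_integral]
  exact congrArg _ (intervalIntegral.integral_congr fun s hs => by rw [inner s hs])

/-- `∫ s in a..b, f s + g` parses as `∫ s in a..b, (f s + g)`, so the last integral in
`IntegralEq1` is integrated once more over `[0, t]`. -/
theorem rhs_eq (hk : Continuous k) (h2 : Continuous H2) {x : ℝ → ℝ} (hx : Continuous x)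
    (t : ℝ) :
    rhs k H1 H2 H3 H4 x t = H1 (∫ u in (0 : ℝ)..t, k (x u))
      + (∫ s in (0 : ℝ)..t, H2 (∫ u in s..t, k (x u)))
      + t * ∫ s in (0 : ℝ)..t, H3 (x s) * H4 (∫ u in s..t, k (x u)) := by
  rw [rhs, intervalIntegral.integral_add (Continuous.intervalIntegrable (by fun_prop) _ _)
    intervalIntegrable_const, intervalIntegral.integral_const, smul_eq_mul, sub_zero, add_assoc]

theorem continuous_rhs (hk : Continuous k) (h1 : Continuous H1) (h2 : Continuous H2)
    (h3 : Continuous H3) (h4 : Continuous H4) {x : ℝ → ℝ} (hx : Continuous x) :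
    Continuous (rhs k H1 H2 H3 H4 x) := by
  simp only [funext (rhs_eq (H1 := H1) (H3 := H3) (H4 := H4) hk h2 hx)]
  fun_prop

theorem abs_rhs_sub_le {Lk L1 L2 L3 L4 : NNReal} {M3 M4 T : ℝ} (hk : LipschitzWith Lk k)
    (h1 : LipschitzWith L1 H1) (h2 : LipschitzWith L2 H2) (h3 : LipschitzWith L3 H3)
    (h4 : LipschitzWith L4 H4) (hM3 : ∀ y, |H3 y| ≤ M3) (hM4 : ∀ y, |H4 y| ≤ M4)
    {x y : ℝ → ℝ} (hx : Continuous x) (hy : Continuous y) {t : ℝ} (ht : t ∈ Icc 0 T) :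
    |rhs k H1 H2 H3 H4 x t - rhs k H1 H2 H3 H4 y t|
      ≤ (L1 * Lk + T * L2 * Lk + T ^ 2 * M3 * L4 * Lk + T * M4 * L3)
        * ∫ u in 0..t, |x u - y u| := by
  obtain ⟨ht0, htT⟩ := ht
  have := hk.continuous; have := h2.continuous; have := h3.continuous; have := h4.continuous
  set I := ∫ u in 0..t, |x u - y u|
  have hI : 0 ≤ I := intervalIntegral.integral_nonneg ht0 fun _ _ => abs_nonneg _
  have hM3' : 0 ≤ M3 := (abs_nonneg _).trans (hM3 0)
  have hM4' : 0 ≤ M4 := (abs_nonneg _).trans (hM4 0)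
  have inner : ∀ s ∈ Icc 0 t,
      |(∫ u in s..t, k (x u)) - ∫ u in s..t, k (y u)| ≤ Lk * I := fun s hs =>
    (abs_intervalIntegral_comp_sub_le hk hx hy hs.2).trans <| by
      gcongr
      exact intervalIntegral.integral_mono_interval hs.1 hs.2 le_rfl
        (ae_of_all _ fun _ => abs_nonneg _) (Continuous.intervalIntegrable (by fun_prop) _ _)
  have first : |H1 (∫ u in 0..t, k (x u)) - H1 (∫ u in 0..t, k (y u))| ≤ L1 * (Lk * I) := by
    refine (h1.abs_sub_le _ _).trans ?_
    gcongr
    exact inner 0 ⟨le_rfl, ht0⟩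
  have second : |(∫ s in 0..t, H2 (∫ u in s..t, k (x u)))
      - ∫ s in 0..t, H2 (∫ u in s..t, k (y u))| ≤ t * (L2 * (Lk * I)) := by
    refine (abs_intervalIntegral_sub_le_of_forall ht0
      (Continuous.intervalIntegrable (by fun_prop) _ _)
      (Continuous.intervalIntegrable (by fun_prop) _ _)
      (intervalIntegrable_const (c := L2 * (Lk * I))) fun s hs => ?_).trans_eq ?_
    · refine (h2.abs_sub_le _ _).trans ?_
      gcongr
      exact inner s hs
    · rw [intervalIntegral.integral_const, smul_eq_mul, sub_zero]
  have third : |(∫ s in 0..t, H3 (x s) * H4 (∫ u in s..t, k (x u)))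
      - ∫ s in 0..t, H3 (y s) * H4 (∫ u in s..t, k (y u))|
        ≤ t * (M3 * L4 * (Lk * I)) + M4 * L3 * I := by
    refine (abs_intervalIntegral_sub_le_of_forall ht0
      (Continuous.intervalIntegrable (by fun_prop) _ _)
      (Continuous.intervalIntegrable (by fun_prop) _ _)
      (g := fun s => H3 (y s) * H4 (∫ u in s..t, k (y u)))
      (h := fun s => M3 * L4 * (Lk * I) + M4 * L3 * |x s - y s|)
      (Continuous.intervalIntegrable (by fun_prop) _ _) fun s hs => ?_).trans_eq ?_
    · refine (abs_mul_sub_mul_le_s1 h3 h4 hM3 hM4 _ _ _ _).trans ?_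
      gcongr
      exact inner s hs
    · rw [intervalIntegral.integral_add intervalIntegrable_const
        (Continuous.intervalIntegrable (by fun_prop) _ _), intervalIntegral.integral_const,
        intervalIntegral.integral_const_mul, smul_eq_mul, sub_zero]
  rw [rhs_eq hk.continuous h2.continuous hx, rhs_eq hk.continuous h2.continuous hy]
  set a₁ := H1 (∫ u in 0..t, k (x u))
  set b₁ := H1 (∫ u in 0..t, k (y u))
  set a₂ := ∫ s in 0..t, H2 (∫ u in s..t, k (x u))
  set b₂ := ∫ s in 0..t, H2 (∫ u in s..t, k (y u))
  set a₃ := ∫ s in 0..t, H3 (x s) * H4 (∫ u in s..t, k (x u))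
  set b₃ := ∫ s in 0..t, H3 (y s) * H4 (∫ u in s..t, k (y u))
  calc |a₁ + a₂ + t * a₃ - (b₁ + b₂ + t * b₃)|
      = |(a₁ - b₁) + (a₂ - b₂) + t * (a₃ - b₃)| := by ring_nf
    _ ≤ |a₁ - b₁| + |a₂ - b₂| + t * |a₃ - b₃| := by
        rw [← abs_of_nonneg ht0, ← abs_mul, abs_of_nonneg ht0]
        exact abs_add_three _ _ _
    _ ≤ L1 * (Lk * I) + t * (L2 * (Lk * I))
          + t * (t * (M3 * L4 * (Lk * I)) + M4 * L3 * I) := by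
        gcongr
    _ = (L1 * Lk + t * L2 * Lk + t ^ 2 * M3 * L4 * Lk + t * M4 * L3) * I := by ring
    _ ≤ (L1 * Lk + T * L2 * Lk + T ^ 2 * M3 * L4 * Lk + T * M4 * L3) * I := by gcongr

end IntegralEq1

theorem stmt1_general (T : ℝ) (hT : 0 < T) (k H1 H2 H3 H4 : ℝ → ℝ)
    (hk_lip : ∃ K : NNReal, LipschitzWith K k)
    (h1_lip : ∃ K : NNReal, LipschitzWith K H1)
    (h2_lip : ∃ K : NNReal, LipschitzWith K H2)
    (h3_lip : ∃ K : NNReal, LipschitzWith K H3) (h3_bdd : ∃ M : ℝ, ∀ y, |H3 y| ≤ M)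
    (h4_lip : ∃ K : NNReal, LipschitzWith K H4) (h4_bdd : ∃ M : ℝ, ∀ y, |H4 y| ≤ M) :
    (∃ x : ℝ → ℝ, ContinuousOn x (Set.Icc 0 T) ∧ IntegralEq1 k H1 H2 H3 H4 T x) ∧
    (∀ x y : ℝ → ℝ, ContinuousOn x (Set.Icc 0 T) → IntegralEq1 k H1 H2 H3 H4 T x →
      ContinuousOn y (Set.Icc 0 T) → IntegralEq1 k H1 H2 H3 H4 T y →
      Set.EqOn x y (Set.Icc 0 T)) := by
  obtain ⟨Lk, hk⟩ := hk_lip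
  obtain ⟨L1, h1⟩ := h1_lip
  obtain ⟨L2, h2⟩ := h2_lip
  obtain ⟨L3, h3⟩ := h3_lip
  obtain ⟨L4, h4⟩ := h4_lip
  obtain ⟨M3, hM3⟩ := h3_bdd
  obtain ⟨M4, hM4⟩ := h4_bdd
  have hM3' : 0 ≤ M3 := (abs_nonneg _).trans (hM3 0)
  have hM4' : 0 ≤ M4 := (abs_nonneg _).trans (hM4 0)
  exact exists_and_unique_solution_of_volterra_bound hT.le (by positivity)
    (fun x hx => IntegralEq1.continuous_rhs hk.continuous h1.continuous h2.continuous
      h3.continuous h4.continuous hx)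
    (fun x y => IntegralEq1.rhs_congr)
    (fun x y hx hy t ht => IntegralEq1.abs_rhs_sub_le hk h1 h2 h3 h4 hM3 hM4 hx hy ht)

theorem stmt1 (T : ℝ) (hT : 0 < T) (k H1 H2 H3 H4 : ℝ → ℝ)
    (hk_lip : ∃ K : NNReal, LipschitzWith K k) (hk_bdd : ∃ M : ℝ, ∀ y, |k y| ≤ M)
    (h1_lip : ∃ K : NNReal, LipschitzWith K H1) (h1_bdd : ∃ M : ℝ, ∀ y, |H1 y| ≤ M)
    (h2_lip : ∃ K : NNReal, LipschitzWith K H2) (h2_bdd : ∃ M : ℝ, ∀ y, |H2 y| ≤ M)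
    (h3_lip : ∃ K : NNReal, LipschitzWith K H3) (h3_bdd : ∃ M : ℝ, ∀ y, |H3 y| ≤ M)
    (h4_lip : ∃ K : NNReal, LipschitzWith K H4) (h4_bdd : ∃ M : ℝ, ∀ y, |H4 y| ≤ M) :
    (∃ x : ℝ → ℝ, ContinuousOn x (Set.Icc 0 T) ∧ IntegralEq1 k H1 H2 H3 H4 T x) ∧
    (∀ x y : ℝ → ℝ, ContinuousOn x (Set.Icc 0 T) → IntegralEq1 k H1 H2 H3 H4 T x →
      ContinuousOn y (Set.Icc 0 T) → IntegralEq1 k H1 H2 H3 H4 T y →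
      Set.EqOn x y (Set.Icc 0 T)) :=
  stmt1_general T hT k H1 H2 H3 H4 hk_lip h1_lip h2_lip h3_lip h3_bdd h4_lip h4_bdd
end

section
/- Fix T > 0. Let k, H₁, H₂, H₃ : ℝ → ℝ be Lipschitz continuous and let H₄, H₅ : ℝ → ℝ be bounded. Then there exists a constant C, depending only on T, on the Lipschitz constants of k, H₁, H₂, H₃, on the values k(0), H₁(0), H₂(0), H₃(0), and on the supremum norms of H₄ and H₅, such that every continuous function x : [0,T] → ℝ satisfying x_t = H₁(S(0,t)) + ∫₀ᵗ H₂(S(s,t)) ds + ∫₀ᵗ H₃(x_s)·H₅(x_s)·H₄(S(s,t)) ds for all t ∈ [0,T], with S(s,t) = ∫ₛᵗ k(x_u) du, obeys sup_{t ∈ [0,T]} |x_t| ≤ C. -/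
/-!
Since `|S(s,t)| ≤ |k 0| T + Lk ∫₀ᵗ |x|` for `0 ≤ s ≤ t ≤ T`, the Lipschitz and sup-norm bounds
estimate every term of the equation linearly in `∫₀ᵗ |x|`, giving `|x t| ≤ A + B ∫₀ᵗ |x|` with
`A, B` built from the data only. The integral form of Gronwall's inequality, obtained from the
differential one applied to `t ↦ ∫₀ᵗ |x|`, turns this into `|x t| ≤ A e^{BT}`.
-/

open MeasureTheory Set

/-- The integral equation
`x_t = H₁(S(0,t)) + ∫₀ᵗ H₂(S(s,t)) ds + ∫₀ᵗ H₃(x_s)·H₅(x_s)·H₄(S(s,t)) ds`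
with `S(s,t) = ∫ₛᵗ k(x_u) du`. -/
def IntegralEq2 (k H1 H2 H3 H4 H5 : ℝ → ℝ) (T : ℝ) (x : ℝ → ℝ) : Prop :=
  ∀ t ∈ Set.Icc (0 : ℝ) T,
    x t = H1 (∫ u in (0 : ℝ)..t, k (x u))
      + ∫ s in (0 : ℝ)..t, H2 (∫ u in s..t, k (x u))
      + ∫ s in (0 : ℝ)..t, H3 (x s) * H5 (x s) * H4 (∫ u in s..t, k (x u))

open Real
open scoped NNReal

theorem add_mul_gronwallBound_zero (A B t : ℝ) :
    A + B * gronwallBound 0 B A t = A * exp (B * t) := by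
  rcases eq_or_ne B 0 with rfl | hB
  · simp
  · rw [gronwallBound_of_K_ne_0 hB]
    field_simp
    ring

theorem le_mul_exp_of_le_add_mul_integral_s3 {u : ℝ → ℝ} {a b A B : ℝ}
    (hu : ContinuousOn u (Icc a b)) (hB : 0 ≤ B)
    (h : ∀ t ∈ Icc a b, u t ≤ A + B * ∫ s in a..t, u s) :
    ∀ t ∈ Icc a b, u t ≤ A * exp (B * (t - a)) := by
  intro t ht
  have hab : a ≤ b := ht.1.trans ht.2
  set v : ℝ → ℝ := fun s => u (projIcc a b hab s)
  have hv : Continuous v :=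
    hu.comp_continuous (continuous_subtype_val.comp continuous_projIcc) fun s => Subtype.mem _
  have hvu : ∀ s ∈ Icc a b, v s = u s := fun s hs => by simp [v, projIcc_of_mem hab hs]
  have hint : ∀ s ∈ Icc a b, ∫ r in a..s, v r = ∫ r in a..s, u r := fun s hs =>
    intervalIntegral.integral_congr fun r hr => by
      rw [uIcc_of_le hs.1] at hr
      exact hvu r ⟨hr.1, hr.2.trans hs.2⟩
  have hderiv : ∀ s, HasDerivAt (fun s => ∫ r in a..s, v r) (v s) s := fun s =>
    (hv.integral_hasStrictDerivAt a s).hasDerivAt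
  have hφ : ∫ r in a..t, v r ≤ gronwallBound 0 B A (t - a) :=
    le_gronwallBound_of_liminf_deriv_right_le
      (fun s _ => (hderiv s).continuousAt.continuousWithinAt)
      (fun s _ _ hr => (hderiv s).hasDerivWithinAt.liminf_right_slope_le hr)
      (by simp)
      (fun s hs => by
        rw [hvu s (Ico_subset_Icc_self hs), hint s (Ico_subset_Icc_self hs)]
        linarith [h s (Ico_subset_Icc_self hs)])
      t ht
  calc u t ≤ A + B * ∫ s in a..t, u s := h t ht
    _ ≤ A + B * gronwallBound 0 B A (t - a) := by
      rw [← hint t ht]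
      gcongr
    _ = A * exp (B * (t - a)) := add_mul_gronwallBound_zero A B (t - a)

theorem LipschitzWith.abs_le_abs_apply_zero_add {f : ℝ → ℝ} {L : ℝ≥0} (hf : LipschitzWith L f)
    (y : ℝ) : |f y| ≤ |f 0| + L * |y| := by
  have h := hf.dist_le_mul y 0
  rw [Real.dist_eq, Real.dist_eq, sub_zero] at h
  linarith [abs_sub_abs_le_abs_sub (f y) (f 0)]

theorem abs_integral_comp_le_of_lipschitzWith {f x : ℝ → ℝ} {L : ℝ≥0} (hf : LipschitzWith L f)
    {a s r : ℝ} (has : a ≤ s) (hsr : s ≤ r)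
    (hx : IntervalIntegrable (fun u => |x u|) volume a r) :
    |∫ u in s..r, f (x u)| ≤ |f 0| * (r - a) + L * ∫ u in a..r, |x u| := by
  have hg : IntervalIntegrable (fun u => |f 0| + L * |x u|) volume a r :=
    intervalIntegrable_const.add (hx.const_mul _)
  calc |∫ u in s..r, f (x u)| ≤ ∫ u in s..r, (|f 0| + L * |x u|) := by
        rw [← Real.norm_eq_abs]
        exact intervalIntegral.norm_integral_le_of_norm_le hsr
          (Filter.Eventually.of_forall fun u _ => hf.abs_le_abs_apply_zero_add (x u))
          (hg.mono_set (uIcc_subset_uIcc_right (mem_uIcc_of_le has hsr)))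
    _ ≤ ∫ u in a..r, (|f 0| + L * |x u|) :=
        intervalIntegral.integral_mono_interval has hsr le_rfl
          (Filter.Eventually.of_forall fun u => by positivity) hg
    _ = |f 0| * (r - a) + L * ∫ u in a..r, |x u| := by
        rw [intervalIntegral.integral_add intervalIntegrable_const (hx.const_mul _),
          intervalIntegral.integral_const, intervalIntegral.integral_const_mul, smul_eq_mul,
          mul_comm]

theorem abs_integral_comp_mul_le_of_lipschitzWith {f g x : ℝ → ℝ} {L : ℝ≥0} {M : ℝ}
    (hf : LipschitzWith L f) (hg : ∀ s, |g s| ≤ M) {a r : ℝ} (har : a ≤ r)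
    (hx : IntervalIntegrable (fun u => |x u|) volume a r) :
    |∫ s in a..r, f (x s) * g s| ≤ (|f 0| * (r - a) + L * ∫ u in a..r, |x u|) * M := by
  have hM : 0 ≤ M := (abs_nonneg _).trans (hg 0)
  calc |∫ s in a..r, f (x s) * g s| ≤ ∫ s in a..r, (|f 0| + L * |x s|) * M := by
        rw [← Real.norm_eq_abs]
        exact intervalIntegral.norm_integral_le_of_norm_le har
          (Filter.Eventually.of_forall fun s _ => by
            rw [Real.norm_eq_abs, abs_mul]
            exact mul_le_mul (hf.abs_le_abs_apply_zero_add (x s)) (hg s) (abs_nonneg _)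
              (by positivity))
          ((intervalIntegrable_const.add (hx.const_mul _)).mul_const _)
    _ = (|f 0| * (r - a) + L * ∫ u in a..r, |x u|) * M := by
        rw [intervalIntegral.integral_mul_const,
          intervalIntegral.integral_add intervalIntegrable_const (hx.const_mul _),
          intervalIntegral.integral_const, intervalIntegral.integral_const_mul, smul_eq_mul,
          mul_comm (r - a)]

section IntegralEq2

variable {k H1 H2 H3 H4 H5 x : ℝ → ℝ} {T : ℝ} {Lk L1 L2 L3 : ℝ≥0} {M4 M5 : ℝ}

theorem abs_comp_integral_comp_le_of_lipschitzWith {H : ℝ → ℝ} {L : ℝ≥0} (hH : LipschitzWith L H)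
    (hk : LipschitzWith Lk k) (hx : ContinuousOn x (Icc 0 T)) {s r : ℝ} (hs : s ∈ Icc 0 r)
    (hr : r ∈ Icc 0 T) :
    |H (∫ u in s..r, k (x u))| ≤ |H 0| + L * (|k 0| * T + Lk * ∫ u in 0..r, |x u|) := by
  have hS := abs_integral_comp_le_of_lipschitzWith hk hs.1 hs.2
    ((hx.abs.mono (Icc_subset_Icc_right hr.2)).intervalIntegrable_of_Icc hr.1)
  have hkT : |k 0| * (r - 0) ≤ |k 0| * T := by rw [sub_zero]; gcongr; exact hr.2
  grw [hH.abs_le_abs_apply_zero_add, hS, hkT]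

theorem IntegralEq2.abs_le_add_mul_integral (hk : LipschitzWith Lk k)
    (hH1 : LipschitzWith L1 H1) (hH2 : LipschitzWith L2 H2) (hH3 : LipschitzWith L3 H3)
    (hH4 : ∀ y, |H4 y| ≤ M4) (hH5 : ∀ y, |H5 y| ≤ M5) (hx : ContinuousOn x (Icc 0 T))
    (heq : IntegralEq2 k H1 H2 H3 H4 H5 T x) {r : ℝ} (hr : r ∈ Icc 0 T) :
    |x r| ≤ (|H1 0| + L1 * |k 0| * T + T * (|H2 0| + L2 * |k 0| * T + |H3 0| * T * (M5 * M4)))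
      + (L1 * Lk + T * (L2 * Lk + L3 * (M5 * M4))) * ∫ u in 0..r, |x u| := by
  have hxr : IntervalIntegrable (fun u => |x u|) volume 0 r :=
    (hx.abs.mono (Icc_subset_Icc_right hr.2)).intervalIntegrable_of_Icc hr.1
  set Φ := ∫ u in 0..r, |x u|
  have hΦ : 0 ≤ Φ := intervalIntegral.integral_nonneg hr.1 fun u _ => abs_nonneg _
  have hM : 0 ≤ M5 * M4 :=
    mul_nonneg ((abs_nonneg _).trans (hH5 0)) ((abs_nonneg _).trans (hH4 0))
  have h1 := abs_comp_integral_comp_le_of_lipschitzWith hH1 hk hx ⟨le_rfl, hr.1⟩ hr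
  have h3 : |∫ s in 0..r, H3 (x s) * H5 (x s) * H4 (∫ u in s..r, k (x u))|
      ≤ (|H3 0| * T + L3 * Φ) * (M5 * M4) := by
    simp_rw [mul_assoc (H3 _)]
    grw [abs_integral_comp_mul_le_of_lipschitzWith hH3
      (fun s => (abs_mul _ _).trans_le (mul_le_mul (hH5 _) (hH4 _) (abs_nonneg _)
        ((abs_nonneg _).trans (hH5 0)))) hr.1 hxr, sub_zero, hr.2]
  set D := |H2 0| + L2 * (|k 0| * T + Lk * Φ) + (|H3 0| * T + L3 * Φ) * (M5 * M4)
  have hT : 0 ≤ T := hr.1.trans hr.2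
  have hD : 0 ≤ D := add_nonneg (by positivity) (mul_nonneg (by positivity) hM)
  -- The third integral of `IntegralEq2` lies inside the second one, by the scope of `∫`.
  have h23 : |∫ s in 0..r, (H2 (∫ u in s..r, k (x u))
      + ∫ s in 0..r, H3 (x s) * H5 (x s) * H4 (∫ u in s..r, k (x u)))| ≤ D * T := by
    rw [← Real.norm_eq_abs]
    grw [intervalIntegral.norm_integral_le_of_norm_le_const fun s hs => ?_]
    · rw [sub_zero, abs_of_nonneg hr.1]
      gcongr
      exact hr.2
    rw [uIoc_of_le hr.1] at hs
    grw [Real.norm_eq_abs, abs_add_le, h3,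
      abs_comp_integral_comp_le_of_lipschitzWith hH2 hk hx ⟨hs.1.le, hs.2⟩ hr]
  calc |x r| ≤ |H1 (∫ u in 0..r, k (x u))| + |∫ s in 0..r, (H2 (∫ u in s..r, k (x u))
      + ∫ s in 0..r, H3 (x s) * H5 (x s) * H4 (∫ u in s..r, k (x u)))| := by
        rw [heq r hr]; exact abs_add_le _ _
    _ ≤ |H1 0| + L1 * (|k 0| * T + Lk * Φ) + D * T := add_le_add h1 h23
    _ = _ := by ring

theorem IntegralEq2.abs_le_mul_exp (hk : LipschitzWith Lk k)
    (hH1 : LipschitzWith L1 H1) (hH2 : LipschitzWith L2 H2) (hH3 : LipschitzWith L3 H3)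
    (hH4 : ∀ y, |H4 y| ≤ M4) (hH5 : ∀ y, |H5 y| ≤ M5) (hx : ContinuousOn x (Icc 0 T))
    (heq : IntegralEq2 k H1 H2 H3 H4 H5 T x) {t : ℝ} (ht : t ∈ Icc 0 T) :
    |x t| ≤ (|H1 0| + L1 * |k 0| * T + T * (|H2 0| + L2 * |k 0| * T + |H3 0| * T * (M5 * M4)))
      * exp ((L1 * Lk + T * (L2 * Lk + L3 * (M5 * M4))) * T) := by
  have hT : 0 ≤ T := ht.1.trans ht.2
  have hM : 0 ≤ M5 * M4 :=
    mul_nonneg ((abs_nonneg _).trans (hH5 0)) ((abs_nonneg _).trans (hH4 0))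
  grw [le_mul_exp_of_le_add_mul_integral_s3 hx.abs (by positivity)
    (fun r hr => heq.abs_le_add_mul_integral hk hH1 hH2 hH3 hH4 hH5 hx hr) t ht, sub_zero, ht.2]

end IntegralEq2

theorem stmt3_general (T : ℝ)
    (Lk L1 L2 L3 : NNReal) (k0 H10 H20 H30 M4 M5 : ℝ) :
    ∃ C : ℝ, ∀ k H1 H2 H3 H4 H5 : ℝ → ℝ,
      LipschitzWith Lk k → LipschitzWith L1 H1 → LipschitzWith L2 H2 →
      LipschitzWith L3 H3 →
      k 0 = k0 → H1 0 = H10 → H2 0 = H20 → H3 0 = H30 →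
      (∀ y, |H4 y| ≤ M4) → (∀ y, |H5 y| ≤ M5) →
      ∀ x : ℝ → ℝ, ContinuousOn x (Set.Icc 0 T) →
        IntegralEq2 k H1 H2 H3 H4 H5 T x →
        ∀ t ∈ Set.Icc (0 : ℝ) T, |x t| ≤ C := by
  refine ⟨(|H10| + L1 * |k0| * T + T * (|H20| + L2 * |k0| * T + |H30| * T * (M5 * M4)))
      * exp ((L1 * Lk + T * (L2 * Lk + L3 * (M5 * M4))) * T), ?_⟩
  rintro k H1 H2 H3 H4 H5 hk hH1 hH2 hH3 rfl rfl rfl rfl hH4 hH5 x hx heq t ht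
  exact heq.abs_le_mul_exp hk hH1 hH2 hH3 hH4 hH5 hx ht

/-- A priori (Gronwall) bound: the constant `C` depends only on `T`, the Lipschitz
constants of `k, H₁, H₂, H₃`, the values `k(0), H₁(0), H₂(0), H₃(0)`, and the sup
norms of `H₄`, `H₅`. -/
theorem stmt3 (T : ℝ) (hT : 0 < T)
    (Lk L1 L2 L3 : NNReal) (k0 H10 H20 H30 M4 M5 : ℝ) :
    ∃ C : ℝ, ∀ k H1 H2 H3 H4 H5 : ℝ → ℝ,
      LipschitzWith Lk k → LipschitzWith L1 H1 → LipschitzWith L2 H2 →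
      LipschitzWith L3 H3 →
      k 0 = k0 → H1 0 = H10 → H2 0 = H20 → H3 0 = H30 →
      (∀ y, |H4 y| ≤ M4) → (∀ y, |H5 y| ≤ M5) →
      ∀ x : ℝ → ℝ, ContinuousOn x (Set.Icc 0 T) →
        IntegralEq2 k H1 H2 H3 H4 H5 T x →
        ∀ t ∈ Set.Icc (0 : ℝ) T, |x t| ≤ C :=
  stmt3_general T Lk L1 L2 L3 k0 H10 H20 H30 M4 M5
end

section
/- Fix T > 0. For each n let B_n : [0,T] → ℝ be nondecreasing and right-continuous, and suppose B_n → B uniformly on [0,T], where B : [0,T] → ℝ is continuous and nondecreasing. Let f, f_n : [0,T] × [0,T] → ℝ be continuous functions with f_n → f uniformly on [0,T] × [0,T]. Then sup_{t ∈ [0,T]} | ∫_{(0,t]} f_n(s,t) dB_n(s) − ∫_{(0,t]} f(s,t) dB(s) | → 0 as n → ∞, where the integrals are with respect to the Lebesgue–Stieltjes measures induced by B_n and B. -/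
open MeasureTheory Set Filter

/-!
Write `∫ fₙ dBₙ − ∫ f dB = ∫ (fₙ − f) dBₙ + (∫ f dBₙ − ∫ f dB)`. The first term is at most
`sup |fₙ − f|` times the mass `Bₙ t − Bₙ 0`, which stays bounded. For the second, cut `(0, t]`
into `k` pieces shorter than a modulus of uniform continuity of `f`, with `k` independent of `t`:
against either measure the integral is close to the Riemann–Stieltjes sum with left-endpoint
values, and the two sums differ by at most `2 k sup |f| sup |Bₙ − B|`.
-/

namespace StieltjesFunction

theorem measureReal_Ioc (F : StieltjesFunction ℝ) {a b : ℝ} (hab : a ≤ b) :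
    F.measure.real (Ioc a b) = F b - F a := by
  rw [measureReal_def, F.measure_Ioc, ENNReal.toReal_ofReal (sub_nonneg.2 (F.mono hab))]

theorem abs_setIntegral_Ioc_le (F : StieltjesFunction ℝ) {a b r : ℝ} (hab : a ≤ b)
    {h : ℝ → ℝ} (hh : ∀ x ∈ Ioc a b, |h x| ≤ r) :
    |∫ x in Ioc a b, h x ∂F.measure| ≤ r * (F b - F a) := by
  rw [← F.measureReal_Ioc hab]
  exact norm_setIntegral_le_of_norm_le_const (f := h) measure_Ioc_lt_top hh

end StieltjesFunction

def riemannStieltjesSum (F : ℝ → ℝ) (g v : ℕ → ℝ) (k : ℕ) : ℝ :=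
  ∑ i ∈ Finset.range k, v i * (F (g (i + 1)) - F (g i))

theorem StieltjesFunction.abs_setIntegral_Ioc_sub_riemannStieltjesSum_le
    (F : StieltjesFunction ℝ) {g : ℕ → ℝ} (hg : Monotone g) {k : ℕ} {h : ℝ → ℝ}
    (hint : IntegrableOn h (Ioc (g 0) (g k)) F.measure) {v : ℕ → ℝ} {r : ℝ}
    (hv : ∀ i < k, ∀ x ∈ Ioc (g i) (g (i + 1)), |h x - v i| ≤ r) :
    |∫ x in Ioc (g 0) (g k), h x ∂F.measure - riemannStieltjesSum F g v k|
      ≤ r * (F (g k) - F (g 0)) := by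
  have hpiece : ∀ i < k, IntegrableOn h (Ioc (g i) (g (i + 1))) F.measure := fun i hi =>
    hint.mono_set (Ioc_subset_Ioc (hg i.zero_le) (hg hi))
  have hsplit : ∫ x in Ioc (g 0) (g k), h x ∂F.measure
      = ∑ i ∈ Finset.range k, ∫ x in Ioc (g i) (g (i + 1)), h x ∂F.measure := by
    rw [← intervalIntegral.integral_of_le (hg k.zero_le),
      ← intervalIntegral.sum_integral_adjacent_intervals fun i hi =>
        (intervalIntegrable_iff_integrableOn_Ioc_of_le (hg i.le_succ)).2 (hpiece i hi)]
    exact Finset.sum_congr rfl fun i _ => intervalIntegral.integral_of_le (hg i.le_succ)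
  have hterm : ∀ i < k, ∫ x in Ioc (g i) (g (i + 1)), h x ∂F.measure
      - v i * (F (g (i + 1)) - F (g i)) = ∫ x in Ioc (g i) (g (i + 1)), (h x - v i) ∂F.measure := by
    intro i hi
    rw [integral_sub (hpiece i hi) (integrableOn_const measure_Ioc_lt_top.ne), setIntegral_const,
      F.measureReal_Ioc (hg i.le_succ), smul_eq_mul, mul_comm]
  calc |∫ x in Ioc (g 0) (g k), h x ∂F.measure - riemannStieltjesSum F g v k|
      = |∑ i ∈ Finset.range k, ∫ x in Ioc (g i) (g (i + 1)), (h x - v i) ∂F.measure| := by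
        rw [hsplit, riemannStieltjesSum, ← Finset.sum_sub_distrib]
        exact congrArg _ (Finset.sum_congr rfl fun i hi => hterm i (Finset.mem_range.1 hi))
    _ ≤ ∑ i ∈ Finset.range k, |∫ x in Ioc (g i) (g (i + 1)), (h x - v i) ∂F.measure| :=
        Finset.abs_sum_le_sum_abs _ _
    _ ≤ ∑ i ∈ Finset.range k, r * (F (g (i + 1)) - F (g i)) :=
        Finset.sum_le_sum fun i hi =>
          F.abs_setIntegral_Ioc_le (hg i.le_succ) (hv i (Finset.mem_range.1 hi))
    _ = r * (F (g k) - F (g 0)) := by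
        rw [← Finset.mul_sum, Finset.sum_range_sub fun i => F (g i)]

theorem abs_riemannStieltjesSum_sub_le {F G : ℝ → ℝ} {g v : ℕ → ℝ} {k : ℕ} {M ρ : ℝ}
    (hv : ∀ i < k, |v i| ≤ M) (hFG : ∀ i ≤ k, |F (g i) - G (g i)| ≤ ρ) :
    |riemannStieltjesSum F g v k - riemannStieltjesSum G g v k| ≤ k * (M * (2 * ρ)) := by
  have hterm : ∀ i < k,
      |v i * (F (g (i + 1)) - F (g i)) - v i * (G (g (i + 1)) - G (g i))| ≤ M * (2 * ρ) := by
    intro i hi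
    have hdiff : |(F (g (i + 1)) - G (g (i + 1))) - (F (g i) - G (g i))| ≤ 2 * ρ := by
      linarith [abs_sub (F (g (i + 1)) - G (g (i + 1))) (F (g i) - G (g i)), hFG (i + 1) hi,
        hFG i hi.le]
    rw [← mul_sub, abs_mul, sub_sub_sub_comm]
    exact mul_le_mul (hv i hi) hdiff (abs_nonneg _) ((abs_nonneg _).trans (hv i hi))
  calc |riemannStieltjesSum F g v k - riemannStieltjesSum G g v k|
      ≤ ∑ i ∈ Finset.range k,
          |v i * (F (g (i + 1)) - F (g i)) - v i * (G (g (i + 1)) - G (g i))| := by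
        rw [riemannStieltjesSum, riemannStieltjesSum, ← Finset.sum_sub_distrib]
        exact Finset.abs_sum_le_sum_abs _ _
    _ ≤ ∑ _i ∈ Finset.range k, M * (2 * ρ) :=
        Finset.sum_le_sum fun i hi => hterm i (Finset.mem_range.1 hi)
    _ = k * (M * (2 * ρ)) := by rw [Finset.sum_const, Finset.card_range, nsmul_eq_mul]

def uniformPartition (a b c : ℝ) (i : ℕ) : ℝ := min (a + i * c) b

section uniformPartition

variable {a b c : ℝ}

theorem monotone_uniformPartition (hc : 0 ≤ c) : Monotone (uniformPartition a b c) :=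
  fun _ _ hij => min_le_min_right b (by gcongr)

theorem uniformPartition_zero (hab : a ≤ b) : uniformPartition a b c 0 = a := by
  simp [uniformPartition, hab]

theorem uniformPartition_of_le {k : ℕ} (hk : b ≤ a + k * c) : uniformPartition a b c k = b :=
  min_eq_right hk

theorem uniformPartition_mem_Icc (hab : a ≤ b) (hc : 0 ≤ c) (i : ℕ) :
    uniformPartition a b c i ∈ Icc a b :=
  ⟨le_min (le_add_of_nonneg_right (by positivity)) hab, min_le_right _ _⟩

theorem uniformPartition_succ_sub_le (hc : 0 ≤ c) (i : ℕ) :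
    uniformPartition a b c (i + 1) - uniformPartition a b c i ≤ c := by
  simp only [uniformPartition]
  push_cast
  rcases le_total (a + i * c) b with h | h
  · rw [min_eq_left h]; linarith [min_le_left (a + (i + 1) * c) b]
  · rw [min_eq_right h]; linarith [min_le_right (a + (i + 1) * c) b]

end uniformPartition

theorem StieltjesFunction.abs_setIntegral_Ioc_sub_setIntegral_Ioc_le_of_partition
    (F G : StieltjesFunction ℝ) {g : ℕ → ℝ} (hg : Monotone g) {k : ℕ} {h : ℝ → ℝ}
    (hF : IntegrableOn h (Ioc (g 0) (g k)) F.measure)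
    (hG : IntegrableOn h (Ioc (g 0) (g k)) G.measure) {r M ρ : ℝ}
    (hosc : ∀ i < k, ∀ x ∈ Ioc (g i) (g (i + 1)), |h x - h (g i)| ≤ r)
    (hM : ∀ i < k, |h (g i)| ≤ M) (hFG : ∀ i ≤ k, |F (g i) - G (g i)| ≤ ρ) :
    |∫ x in Ioc (g 0) (g k), h x ∂F.measure - ∫ x in Ioc (g 0) (g k), h x ∂G.measure|
      ≤ r * (F (g k) - F (g 0)) + k * (M * (2 * ρ)) + r * (G (g k) - G (g 0)) := by
  set v := fun i => h (g i)
  have hFsum := F.abs_setIntegral_Ioc_sub_riemannStieltjesSum_le hg hF (v := v) hosc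
  have hGsum := G.abs_setIntegral_Ioc_sub_riemannStieltjesSum_le hg hG (v := v) hosc
  have hsums := abs_riemannStieltjesSum_sub_le (F := F) (G := G) (g := g) (v := v) hM hFG
  rw [abs_sub_comm] at hGsum
  linarith [abs_sub_le (∫ x in Ioc (g 0) (g k), h x ∂F.measure) (riemannStieltjesSum F g v k)
      (∫ x in Ioc (g 0) (g k), h x ∂G.measure),
    abs_sub_le (riemannStieltjesSum F g v k) (riemannStieltjesSum G g v k)
      (∫ x in Ioc (g 0) (g k), h x ∂G.measure)]

theorem StieltjesFunction.abs_setIntegral_Ioc_sub_setIntegral_Ioc_le (F G : StieltjesFunction ℝ)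
    {a b c : ℝ} {k : ℕ} (hab : a ≤ b) (hc : 0 ≤ c) (hk : b ≤ a + k * c) {h : ℝ → ℝ}
    (hF : IntegrableOn h (Ioc a b) F.measure) (hG : IntegrableOn h (Ioc a b) G.measure)
    {r M ρ : ℝ} (hosc : ∀ x ∈ Icc a b, ∀ y ∈ Icc a b, |x - y| ≤ c → |h x - h y| ≤ r)
    (hM : ∀ x ∈ Icc a b, |h x| ≤ M) (hFG : ∀ x ∈ Icc a b, |F x - G x| ≤ ρ) :
    |∫ x in Ioc a b, h x ∂F.measure - ∫ x in Ioc a b, h x ∂G.measure|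
      ≤ r * (F b - F a) + k * (M * (2 * ρ)) + r * (G b - G a) := by
  set g := uniformPartition a b c
  have hg0 : g 0 = a := uniformPartition_zero hab
  have hgk : g k = b := uniformPartition_of_le hk
  have hg : ∀ i, g i ∈ Icc a b := uniformPartition_mem_Icc hab hc
  have hpiece : ∀ i < k, ∀ x ∈ Ioc (g i) (g (i + 1)), |h x - h (g i)| ≤ r := by
    intro i _ x hx
    refine hosc x ⟨(hg i).1.trans hx.1.le, hx.2.trans (hg (i + 1)).2⟩ (g i) (hg i) ?_
    rw [abs_of_pos (sub_pos.2 hx.1)]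
    linarith [hx.2, uniformPartition_succ_sub_le (a := a) (b := b) hc i]
  have hest := F.abs_setIntegral_Ioc_sub_setIntegral_Ioc_le_of_partition G (g := g)
    (monotone_uniformPartition hc) (by rwa [hg0, hgk]) (by rwa [hg0, hgk]) hpiece
    (fun i _ => hM _ (hg i)) (fun i _ => hFG _ (hg i))
  rwa [hg0, hgk] at hest

theorem sub_le_sub_add_of_dist_lt {F G : ℝ → ℝ} (hG : Monotone G) {a t b ρ : ℝ} (htb : t ≤ b)
    (ha : dist (G a) (F a) < ρ) (ht : dist (G t) (F t) < ρ) :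
    F t - F a ≤ G b - G a + 2 * ρ := by
  rw [Real.dist_eq, abs_sub_lt_iff] at ha ht
  linarith [hG htb]

theorem ContinuousOn.integrableOn_Icc_of_prod {f : ℝ → ℝ → ℝ} {a b t : ℝ} {s : Set ℝ}
    (hf : ContinuousOn (fun p : ℝ × ℝ => f p.1 p.2) (Icc a b ×ˢ s)) (ht : t ∈ s)
    (μ : Measure ℝ) [IsLocallyFiniteMeasure μ] : IntegrableOn (fun x => f x t) (Icc a b) μ :=
  (hf.comp (continuous_id.prodMk continuous_const).continuousOn
    fun _ hx => mk_mem_prod hx ht).integrableOn_Icc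

theorem tendstoUniformlyOn_setIntegral_Ioc_of_tendstoUniformlyOn {T : ℝ} (hT : 0 ≤ T)
    {Bn : ℕ → StieltjesFunction ℝ} {B : StieltjesFunction ℝ}
    (hBconv : TendstoUniformlyOn (fun n t => Bn n t) (fun t => B t) atTop (Icc 0 T))
    {f : ℝ → ℝ → ℝ} (hf : ContinuousOn (fun p : ℝ × ℝ => f p.1 p.2) (Icc 0 T ×ˢ Icc 0 T)) :
    TendstoUniformlyOn (fun n t => ∫ s in Ioc 0 t, f s t ∂(Bn n).measure)
      (fun t => ∫ s in Ioc 0 t, f s t ∂B.measure) atTop (Icc 0 T) := by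
  rw [Metric.tendstoUniformlyOn_iff]
  intro ε hε
  have hK : IsCompact (Icc (0 : ℝ) T ×ˢ Icc 0 T) := isCompact_Icc.prod isCompact_Icc
  obtain ⟨M, hM⟩ := hK.exists_bound_of_continuousOn hf
  have hM0 : 0 ≤ M := (norm_nonneg _).trans (hM (0, 0) ⟨⟨le_rfl, hT⟩, ⟨le_rfl, hT⟩⟩)
  set D := B T - B 0
  have hD : 0 ≤ D := sub_nonneg.2 (B.mono hT)
  set r := ε / (8 * (D + 2))
  have hr : 0 < r := by positivity
  have hrD : r * (D + 2) = ε / 8 := by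
    simp only [r]; field_simp
  obtain ⟨δ, hδ, hosc⟩ :=
    Metric.uniformContinuousOn_iff.1 (hK.uniformContinuousOn_of_continuous hf) r hr
  obtain ⟨c, hc, hcδ⟩ : ∃ c, 0 < c ∧ c < δ := ⟨δ / 2, by positivity, half_lt_self hδ⟩
  obtain ⟨k, hk⟩ : ∃ k : ℕ, T ≤ 0 + k * c := by
    obtain ⟨k, hk⟩ := exists_nat_ge (T / c)
    exact ⟨k, by rwa [zero_add, ← div_le_iff₀ hc]⟩
  set ρ := min 1 (ε / (4 * ((k + 1) * (M + 1))))
  have hρ : 0 < ρ := lt_min one_pos (by positivity)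
  filter_upwards [Metric.tendstoUniformlyOn_iff.1 hBconv ρ hρ] with n hn t ht
  have htT : Icc 0 t ⊆ Icc 0 T := Icc_subset_Icc le_rfl ht.2
  have hint : ∀ (μ : Measure ℝ) [IsLocallyFiniteMeasure μ],
      IntegrableOn (fun s => f s t) (Ioc 0 t) μ := fun μ _ =>
    (hf.integrableOn_Icc_of_prod ht μ).mono_set (Ioc_subset_Icc_self.trans htT)
  have hosc' : ∀ x ∈ Icc 0 t, ∀ y ∈ Icc 0 t, |x - y| ≤ c → |f x t - f y t| ≤ r := by
    intro x hx y hy hxy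
    have hdist : dist (x, t) (y, t) < δ := by
      rw [Prod.dist_eq, dist_self, max_eq_left dist_nonneg, Real.dist_eq]
      exact hxy.trans_lt hcδ
    exact (hosc (x, t) ⟨htT hx, ht⟩ (y, t) ⟨htT hy, ht⟩ hdist).le
  have hclose : ∀ x ∈ Icc 0 t, |Bn n x - B x| ≤ ρ := fun x hx => by
    rw [← Real.dist_eq, dist_comm]; exact (hn x (htT hx)).le
  have hest := (Bn n).abs_setIntegral_Ioc_sub_setIntegral_Ioc_le B ht.1 hc.le (hk.trans' ht.2)
    (hint _) (hint _) hosc' (fun x hx => hM (x, t) ⟨htT hx, ht⟩) hclose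
  have hmassn : Bn n t - Bn n 0 ≤ D + 2 := by
    linarith [sub_le_sub_add_of_dist_lt B.mono ht.2 (hn 0 ⟨le_rfl, hT⟩) (hn t ht),
      min_le_left 1 (ε / (4 * ((k + 1) * (M + 1))))]
  have hmass : B t - B 0 ≤ D + 2 := by linarith [B.mono ht.2]
  have hsum : k * (M * (2 * ρ)) ≤ ε / 2 := by
    have hρε : (k + 1) * (M + 1) * ρ ≤ ε / 4 := by
      rw [← le_div_iff₀' (by positivity), div_div]
      exact min_le_right _ _
    nlinarith
  rw [Real.dist_eq, abs_sub_comm]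
  calc _ ≤ r * (Bn n t - Bn n 0) + k * (M * (2 * ρ)) + r * (B t - B 0) := hest
    _ ≤ r * (D + 2) + ε / 2 + r * (D + 2) := by gcongr
    _ < ε := by linarith

theorem tendstoUniformlyOn_setIntegral_Ioc_sub_of_tendstoUniformlyOn {T : ℝ} (hT : 0 ≤ T)
    {Bn : ℕ → StieltjesFunction ℝ} {B : StieltjesFunction ℝ}
    (hBconv : TendstoUniformlyOn (fun n t => Bn n t) (fun t => B t) atTop (Icc 0 T))
    {f : ℝ → ℝ → ℝ} {fn : ℕ → ℝ → ℝ → ℝ}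
    (hf : ContinuousOn (fun p : ℝ × ℝ => f p.1 p.2) (Icc 0 T ×ˢ Icc 0 T))
    (hfn : ∀ n, ContinuousOn (fun p : ℝ × ℝ => fn n p.1 p.2) (Icc 0 T ×ˢ Icc 0 T))
    (hfconv : TendstoUniformlyOn (fun n (p : ℝ × ℝ) => fn n p.1 p.2)
      (fun p : ℝ × ℝ => f p.1 p.2) atTop (Icc 0 T ×ˢ Icc 0 T)) :
    TendstoUniformlyOn (fun n t => ∫ s in Ioc 0 t, fn n s t ∂(Bn n).measure
      - ∫ s in Ioc 0 t, f s t ∂(Bn n).measure) 0 atTop (Icc 0 T) := by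
  rw [Metric.tendstoUniformlyOn_iff]
  intro ε hε
  set D := B T - B 0
  have hD : 0 ≤ D := sub_nonneg.2 (B.mono hT)
  set r := ε / (2 * (D + 2))
  have hr : 0 < r := by positivity
  have hrD : r * (D + 2) = ε / 2 := by simp only [r]; field_simp
  filter_upwards [Metric.tendstoUniformlyOn_iff.1 hBconv 1 one_pos,
    Metric.tendstoUniformlyOn_iff.1 hfconv r hr] with n hBn hfn' t ht
  have hsub : Ioc 0 t ⊆ Icc 0 T := Ioc_subset_Icc_self.trans (Icc_subset_Icc le_rfl ht.2)
  rw [Pi.zero_apply, dist_zero_left, Real.norm_eq_abs,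
    ← integral_sub (((hfn n).integrableOn_Icc_of_prod ht _).mono_set hsub)
      ((hf.integrableOn_Icc_of_prod ht _).mono_set hsub)]
  have hmass := sub_le_sub_add_of_dist_lt B.mono ht.2 (hBn 0 ⟨le_rfl, hT⟩) (hBn t ht)
  calc _ ≤ r * (Bn n t - Bn n 0) := (Bn n).abs_setIntegral_Ioc_le ht.1 fun s hs => by
          rw [abs_sub_comm, ← Real.dist_eq]; exact (hfn' (s, t) ⟨hsub hs, ht⟩).le
    _ ≤ r * (D + 2) := by gcongr; linarith
    _ < ε := by linarith

theorem stmt11_general (T : ℝ) (hT : 0 < T)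
    (Bn : ℕ → StieltjesFunction ℝ) (B : StieltjesFunction ℝ)
    (hBconv : TendstoUniformlyOn (fun n t => Bn n t) (fun t => B t) atTop (Set.Icc 0 T))
    (f : ℝ → ℝ → ℝ) (fn : ℕ → ℝ → ℝ → ℝ)
    (hf : ContinuousOn (fun p : ℝ × ℝ => f p.1 p.2) (Set.Icc 0 T ×ˢ Set.Icc 0 T))
    (hfn : ∀ n, ContinuousOn (fun p : ℝ × ℝ => fn n p.1 p.2) (Set.Icc 0 T ×ˢ Set.Icc 0 T))
    (hfconv : TendstoUniformlyOn (fun n (p : ℝ × ℝ) => fn n p.1 p.2)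
      (fun p : ℝ × ℝ => f p.1 p.2) atTop (Set.Icc 0 T ×ˢ Set.Icc 0 T)) :
    ∀ ε > (0 : ℝ), ∃ N : ℕ, ∀ n ≥ N, ∀ t ∈ Set.Icc (0 : ℝ) T,
      |(∫ s in Set.Ioc (0 : ℝ) t, fn n s t ∂(Bn n).measure) -
        ∫ s in Set.Ioc (0 : ℝ) t, f s t ∂B.measure| ≤ ε := by
  intro ε hε
  have hconv :=
    (tendstoUniformlyOn_setIntegral_Ioc_sub_of_tendstoUniformlyOn hT.le hBconv hf hfn hfconv).add
      (tendstoUniformlyOn_setIntegral_Ioc_of_tendstoUniformlyOn hT.le hBconv hf)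
  obtain ⟨N, hN⟩ := eventually_atTop.1 (Metric.tendstoUniformlyOn_iff.1 hconv ε hε)
  refine ⟨N, fun n hn t ht => ?_⟩
  simpa [Real.dist_eq, abs_sub_comm] using (hN n hn t ht).le

/-- Uniform-in-`t` convergence of Stieltjes integrals: if `Bₙ → B` uniformly on
`[0,T]` with `B` continuous (and all `Bₙ, B` nondecreasing, right-continuous),
and `fₙ → f` uniformly on `[0,T]²` with all of them continuous there, then
`sup_{t∈[0,T]} |∫_{(0,t]} fₙ(s,t) dBₙ(s) − ∫_{(0,t]} f(s,t) dB(s)| → 0`. -/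
theorem stmt11 (T : ℝ) (hT : 0 < T)
    (Bn : ℕ → StieltjesFunction ℝ) (B : StieltjesFunction ℝ)
    (hBcont : ContinuousOn (fun x => B x) (Set.Icc 0 T))
    (hBconv : TendstoUniformlyOn (fun n t => Bn n t) (fun t => B t) atTop (Set.Icc 0 T))
    (f : ℝ → ℝ → ℝ) (fn : ℕ → ℝ → ℝ → ℝ)
    (hf : ContinuousOn (fun p : ℝ × ℝ => f p.1 p.2) (Set.Icc 0 T ×ˢ Set.Icc 0 T))
    (hfn : ∀ n, ContinuousOn (fun p : ℝ × ℝ => fn n p.1 p.2) (Set.Icc 0 T ×ˢ Set.Icc 0 T))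
    (hfconv : TendstoUniformlyOn (fun n (p : ℝ × ℝ) => fn n p.1 p.2)
      (fun p : ℝ × ℝ => f p.1 p.2) atTop (Set.Icc 0 T ×ˢ Set.Icc 0 T)) :
    ∀ ε > (0 : ℝ), ∃ N : ℕ, ∀ n ≥ N, ∀ t ∈ Set.Icc (0 : ℝ) T,
      |(∫ s in Set.Ioc (0 : ℝ) t, fn n s t ∂(Bn n).measure) -
        ∫ s in Set.Ioc (0 : ℝ) t, f s t ∂B.measure| ≤ ε :=
  stmt11_general T hT Bn B hBconv f fn hf hfn hfconv
end
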